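/- arXiv:2401.00640 — 6 statements merged into one kernel-verified Lean document; each statement's English description precedes it below -/
import Mathlib

section
/- Let {X_n : n ∈ (ℤ₊)^d} satisfy condition (MD): (1/|n|) ∑_{k ⪯ n} P(|X_k| > x) ≤ M P(|X| > x) for all x ≥ 0 and n. If 1 ≤ p < 2, 1 ≤ r ≤ p, and E[|X|^p (log⁺|X|)^{d-1}] < ∞, then ∑_{n ∈ (ℤ₊)^d} |n|^{(p-2)/r - 2} ∑_{k ⪯ n} E[X_k²·1{|X_k| ≤ |n|^{1/r}}] < ∞. -/
open MeasureTheory ENNReal Finset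

lemma sum_rpow_range_le {α : ℝ} (hα : α < -1) {m0 : ℕ} (hm0 : 1 ≤ m0) (B : ℕ) :
    ∑ i ∈ Finset.range B, ((m0 + i : ℕ) : ℝ) ^ α
      ≤ (m0 : ℝ) ^ α + (m0 : ℝ) ^ (α + 1) / (-α - 1) := by
  have hm0R : (1:ℝ) ≤ (m0:ℝ) := by exact_mod_cast hm0
  have hm0pos : (0:ℝ) < m0 := by linarith
  have hmain : ∀ B : ℕ, ∑ i ∈ Finset.range B, ((m0:ℝ) + (i:ℝ) + 1) ^ α
      ≤ (m0 : ℝ) ^ (α + 1) / (-α - 1) := by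
    intro B
    have hanti : AntitoneOn (fun x : ℝ => x ^ α) (Set.Icc (m0:ℝ) ((m0:ℝ) + B)) := by
      intro x hx y hy hxy
      exact Real.rpow_le_rpow_of_nonpos (lt_of_lt_of_le hm0pos hx.1) hxy (by linarith)
    have h1 := hanti.sum_le_integral
    push_cast at h1
    have h2 : ∫ x in (m0:ℝ)..((m0:ℝ) + B), x ^ α
        = (((m0:ℝ) + B) ^ (α + 1) - (m0:ℝ) ^ (α + 1)) / (α + 1) := by
      apply integral_rpow
      right
      constructor
      · intro h; rw [h] at hα; norm_num at hα
      · intro h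
        rw [Set.mem_uIcc] at h
        rcases h with ⟨h1, _⟩ | ⟨_, h2⟩ <;> nlinarith [ (Nat.cast_nonneg B : (0:ℝ) ≤ B) ]
    have h5 : ∑ i ∈ Finset.range B, ((m0:ℝ) + (i:ℝ) + 1) ^ α
        ≤ (((m0:ℝ) + B) ^ (α + 1) - (m0:ℝ) ^ (α + 1)) / (α + 1) := by
      rw [← h2]
      refine le_trans (le_of_eq (Finset.sum_congr rfl fun i _ => by ring_nf)) h1
    refine le_trans h5 ?_
    have hrw : (((m0:ℝ) + B) ^ (α + 1) - (m0:ℝ) ^ (α + 1)) / (α + 1)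
        = ((m0:ℝ) ^ (α + 1) - ((m0:ℝ) + B) ^ (α + 1)) / (-α - 1) := by
      rw [← neg_div_neg_eq]; ring_nf
    rw [hrw]
    have hpos : (0:ℝ) ≤ ((m0:ℝ) + B) ^ (α + 1) :=
      Real.rpow_nonneg (by linarith [(Nat.cast_nonneg B : (0:ℝ) ≤ B)]) _
    gcongr
    · linarith
    · linarith
  cases B with
  | zero =>
    simp only [Finset.range_zero, Finset.sum_empty]
    have h4 : (0:ℝ) ≤ (m0:ℝ)^(α+1)/(-α-1) :=
      div_nonneg (Real.rpow_nonneg hm0pos.le _) (by linarith)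
    have h5 : (0:ℝ) ≤ (m0:ℝ)^α := Real.rpow_nonneg hm0pos.le _
    linarith
  | succ n =>
    rw [Finset.sum_range_succ']
    push_cast
    have h6 : ∑ i ∈ Finset.range n, ((m0:ℝ) + ((i:ℝ) + 1)) ^ α
        ≤ (m0 : ℝ) ^ (α + 1) / (-α - 1) := by
      refine le_trans (le_of_eq (Finset.sum_congr rfl fun i _ => by ring_nf)) (hmain n)
    have h7 : ((m0:ℝ) + 0) ^ α = (m0:ℝ) ^ α := by norm_num
    rw [h7]
    linarith

lemma pnat_tail_le {α : ℝ} (hα : α < -1) {N : ℝ} (hN : 1 ≤ N) :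
    ∑' m : ℕ+, (if N ≤ ((m : ℕ) : ℝ) then (((m : ℕ) : ℝ≥0∞)) ^ α else 0)
      ≤ ENNReal.ofReal ((1 + (-α - 1)⁻¹) * N ^ (α + 1)) := by
  rw [← Equiv.pnatEquivNat.symm.tsum_eq]
  simp only [Equiv.pnatEquivNat_symm_apply, Nat.succPNat_coe]
  rw [ENNReal.tsum_eq_iSup_nat]
  apply iSup_le
  intro B
  set m0 := ⌈N⌉₊ with hm0def
  have hm0 : 1 ≤ m0 := Nat.one_le_ceil_iff.mpr (by linarith)
  have hNm0 : N ≤ (m0:ℝ) := Nat.le_ceil N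
  have step1 : ∑ k ∈ Finset.range B, (if N ≤ ((k+1:ℕ):ℝ) then (((k+1:ℕ)):ℝ≥0∞) ^ α else 0)
      = ∑ k ∈ (Finset.range B).filter (fun k => m0 ≤ k+1), (((k+1:ℕ)):ℝ≥0∞) ^ α := by
    rw [Finset.sum_filter]
    apply Finset.sum_congr rfl
    intro k _
    congr 1
    simp only [eq_iff_iff]
    rw [Nat.ceil_le]
  rw [step1]
  set s := (Finset.range B).filter (fun k => m0 ≤ k+1) with hs
  have hinj : Set.InjOn (fun k => k + 1 - m0) s := by
    intro a ha b hb hab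
    simp only [hs, Finset.coe_filter, Set.mem_setOf_eq] at ha hb
    dsimp only at hab
    omega
  have step2 : ∑ k ∈ s, (((k+1:ℕ)):ℝ≥0∞) ^ α
      = ∑ i ∈ s.image (fun k => k + 1 - m0), (((m0 + i:ℕ)):ℝ≥0∞) ^ α := by
    rw [Finset.sum_image hinj]
    apply Finset.sum_congr rfl
    intro k hk
    simp only [hs, Finset.mem_filter] at hk
    congr 2
    omega
  rw [step2]
  have step3 : ∑ i ∈ s.image (fun k => k + 1 - m0), (((m0 + i:ℕ)):ℝ≥0∞) ^ α
      ≤ ∑ i ∈ Finset.range B, (((m0 + i:ℕ)):ℝ≥0∞) ^ α := by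
    apply Finset.sum_le_sum_of_subset
    intro i hi
    simp only [Finset.mem_image, hs, Finset.mem_filter, Finset.mem_range] at hi ⊢
    omega
  refine le_trans step3 ?_
  have step4 : ∀ i : ℕ, (((m0 + i:ℕ)):ℝ≥0∞) ^ α = ENNReal.ofReal (((m0 + i:ℕ):ℝ) ^ α) := by
    intro i
    have hpos : (0:ℝ) < ((m0 + i:ℕ):ℝ) := by
      have := Nat.add_pos_left hm0 i
      exact_mod_cast this
    rw [← ENNReal.ofReal_natCast (m0+i), ENNReal.ofReal_rpow_of_pos hpos]
  simp only [step4]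
  rw [← ENNReal.ofReal_sum_of_nonneg (fun i _ => Real.rpow_nonneg (by positivity) _)]
  apply ENNReal.ofReal_le_ofReal
  refine le_trans (sum_rpow_range_le hα hm0 B) ?_
  have hNpos : (0:ℝ) < N := by linarith
  have hm0pos : (0:ℝ) < (m0:ℝ) := by exact_mod_cast hm0
  have h1 : (m0:ℝ) ^ α ≤ N ^ (α+1) := by
    calc (m0:ℝ) ^ α ≤ N ^ α := Real.rpow_le_rpow_of_nonpos hNpos hNm0 (by linarith)
    _ ≤ N ^ (α+1) := Real.rpow_le_rpow_of_exponent_le hN (by linarith)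
  have h2 : (m0:ℝ) ^ (α+1) ≤ N ^ (α+1) := Real.rpow_le_rpow_of_nonpos hNpos hNm0 (by linarith)
  have h3 : (0:ℝ) < -α - 1 := by linarith
  rw [mul_comm, mul_add, mul_one]
  have h4 : (m0:ℝ)^(α+1)/(-α-1) ≤ N^(α+1) * (-α-1)⁻¹ := by
    rw [div_eq_mul_inv]
    exact mul_le_mul_of_nonneg_right h2 (by positivity)
  linarith

lemma pnat_harmonic_le {N : ℝ} (hN : 1 ≤ N) :
    ∑' m : ℕ+, (if ((m : ℕ) : ℝ) < N then (((m : ℕ) : ℝ≥0∞)) ^ (-1:ℝ) else 0)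
      ≤ ENNReal.ofReal (1 + Real.log N) := by
  rw [← Equiv.pnatEquivNat.symm.tsum_eq]
  simp only [Equiv.pnatEquivNat_symm_apply, Nat.succPNat_coe]
  set K := ⌈N⌉₊ - 1 with hK
  have hvanish : ∀ k ∉ Finset.range K,
      (if ((k+1:ℕ):ℝ) < N then (((k+1:ℕ)):ℝ≥0∞) ^ (-1:ℝ) else 0) = 0 := by
    intro k hk
    rw [if_neg]
    intro hlt
    have : k + 1 < ⌈N⌉₊ := Nat.lt_ceil.mpr (by exact_mod_cast hlt)
    exact hk (Finset.mem_range.mpr (by omega))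
  rw [tsum_eq_sum hvanish]
  have step : ∀ k ∈ Finset.range K,
      (if ((k+1:ℕ):ℝ) < N then (((k+1:ℕ)):ℝ≥0∞) ^ (-1:ℝ) else 0)
        ≤ ENNReal.ofReal (((k:ℝ)+1)⁻¹) := by
    intro k _
    split_ifs with h
    · rw [ENNReal.rpow_neg_one, ← ENNReal.ofReal_natCast (k+1), ← ENNReal.ofReal_inv_of_pos (by positivity)]
      apply ENNReal.ofReal_le_ofReal
      push_cast
      exact le_refl _
    · exact zero_le
  refine le_trans (Finset.sum_le_sum step) ?_
  rw [← ENNReal.ofReal_sum_of_nonneg (fun i _ => by positivity)]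
  apply ENNReal.ofReal_le_ofReal
  have hharm : ∑ k ∈ Finset.range K, ((k:ℝ)+1)⁻¹ = (harmonic K : ℝ) := by
    rw [harmonic_eq_sum_Icc]
    push_cast
    rw [show Finset.Icc 1 K = Finset.Ico 1 (K+1) by rfl, Finset.sum_Ico_eq_sum_range]
    simp [add_comm]
  rw [hharm]
  refine le_trans (harmonic_le_one_add_log K) ?_
  have hKN : (K:ℝ) ≤ N := by
    have h1 : (⌈N⌉₊ : ℝ) < N + 1 := Nat.ceil_lt_add_one (by linarith)
    have h2 : (K:ℝ) ≤ (⌈N⌉₊:ℝ) - 1 := by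
      have : (1:ℕ) ≤ ⌈N⌉₊ := Nat.one_le_ceil_iff.mpr (by linarith)
      rw [hK]
      push_cast [Nat.cast_sub this]
      linarith
    linarith
  have : Real.log K ≤ Real.log N := by
    rcases Nat.eq_zero_or_pos K with h0 | hpos
    · rw [h0]; simp; exact Real.log_nonneg hN
    · exact Real.log_le_log (by exact_mod_cast hpos) hKN
  linarith

/-- `pidx n = n₁ ⋯ n_d` for `n ∈ (ℤ₊)^d`. -/
def pidx {d : ℕ} (n : Fin d → ℕ+) : ℕ := ∏ i, (n i : ℕ)

lemma pidx_pos {d : ℕ} (n : Fin d → ℕ+) : 0 < pidx n :=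
  Finset.prod_pos fun i _ => (n i).pos

lemma pidx_cons {d : ℕ} (m : ℕ+) (n : Fin d → ℕ+) :
    pidx (Fin.cons m n) = (m : ℕ) * pidx n := by
  simp [pidx, Fin.prod_univ_succ]

lemma multi_tail_le {α : ℝ} (hα : α < -1) :
    ∀ d : ℕ, 1 ≤ d → ∀ N : ℝ, 1 ≤ N →
    ∑' n : Fin d → ℕ+, (if N ≤ ((pidx n : ℕ) : ℝ) then (((pidx n : ℕ)) : ℝ≥0∞) ^ α else 0)
      ≤ (ENNReal.ofReal (1 + (-α - 1)⁻¹) + 1) ^ d * ENNReal.ofReal (N ^ (α + 1))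
          * ENNReal.ofReal (1 + Real.log N) ^ (d - 1) := by
  set Cα := ENNReal.ofReal (1 + (-α - 1)⁻¹) with hCα
  have hCnn : (0:ℝ) ≤ 1 + (-α - 1)⁻¹ := by
    have : (0:ℝ) < -α-1 := by linarith
    positivity
  have base : ∀ N : ℝ, 1 ≤ N →
      ∑' m : ℕ+, (if N ≤ ((m : ℕ) : ℝ) then (((m : ℕ)) : ℝ≥0∞) ^ α else 0)
        ≤ Cα * ENNReal.ofReal (N ^ (α + 1)) := by
    intro N hN
    refine le_trans (pnat_tail_le hα hN) ?_
    rw [hCα, ← ENNReal.ofReal_mul hCnn]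
  intro d hd
  induction d, hd using Nat.le_induction with
  | base =>
    intro N hN
    have he := ((Equiv.funUnique (Fin 1) ℕ+).symm.tsum_eq
      (fun n : Fin 1 → ℕ+ => if N ≤ ((pidx n : ℕ) : ℝ) then (((pidx n : ℕ)) : ℝ≥0∞) ^ α else 0))
    rw [← he]
    have hp : ∀ m : ℕ+, pidx ((Equiv.funUnique (Fin 1) ℕ+).symm m) = (m:ℕ) := by
      intro m; simp [pidx]
    simp only [hp]
    refine le_trans (base N hN) ?_
    simp only [pow_one, Nat.sub_self, pow_zero, mul_one]
    exact mul_le_mul_left (le_add_right le_rfl) _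
  | succ d hd IH =>
    intro N hN
    have hNpos : (0:ℝ) < N := by linarith
    have he := ((Fin.consEquiv (fun _ : Fin (d+1) => ℕ+)).tsum_eq
      (fun n : Fin (d+1) → ℕ+ => if N ≤ ((pidx n : ℕ) : ℝ) then (((pidx n : ℕ)) : ℝ≥0∞) ^ α else 0))
    rw [← he]
    rw [ENNReal.tsum_prod']
    have hcons : ∀ (m : ℕ+) (n : Fin d → ℕ+),
        pidx ((Fin.consEquiv (fun _ : Fin (d+1) => ℕ+)) (m, n)) = (m:ℕ) * pidx n := by
      intro m n
      simp [Fin.consEquiv, pidx_cons]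
    simp only [hcons]
    set L := ENNReal.ofReal (1 + Real.log N) with hL
    have hL1 : 1 ≤ L := by
      rw [hL, ENNReal.one_le_ofReal]
      have := Real.log_nonneg hN; linarith
    have key : ∀ m : ℕ+,
        (∑' n : Fin d → ℕ+, (if N ≤ (((m:ℕ) * pidx n : ℕ) : ℝ)
            then ((((m:ℕ) * pidx n : ℕ)) : ℝ≥0∞) ^ α else 0))
          ≤ (if N ≤ ((m:ℕ):ℝ) then (((m:ℕ)):ℝ≥0∞) ^ α else 0) * (Cα+1)^d
            + (if ((m:ℕ):ℝ) < N then (((m:ℕ)):ℝ≥0∞) ^ (-1:ℝ) else 0)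
              * ((Cα+1)^d * ENNReal.ofReal (N ^ (α+1)) * L ^ (d-1)) := by
      intro m
      have hmpos : (0:ℝ) < ((m:ℕ):ℝ) := by exact_mod_cast m.pos
      have hmne : ((m:ℕ):ℝ≥0∞) ≠ 0 := by exact_mod_cast m.pos.ne'
      have hsplit : ∀ n : Fin d → ℕ+, ((((m:ℕ) * pidx n : ℕ)) : ℝ≥0∞) ^ α
          = (((m:ℕ)):ℝ≥0∞)^α * (((pidx n : ℕ)):ℝ≥0∞)^α := by
        intro n
        push_cast
        rw [ENNReal.mul_rpow_of_ne_zero hmne (by exact_mod_cast (pidx_pos n).ne')]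
      by_cases hm : N ≤ ((m:ℕ):ℝ)
      · rw [if_pos hm, if_neg (not_lt.mpr hm), zero_mul, add_zero]
        calc ∑' n : Fin d → ℕ+, (if N ≤ (((m:ℕ) * pidx n : ℕ) : ℝ)
                then ((((m:ℕ) * pidx n : ℕ)) : ℝ≥0∞) ^ α else 0)
            ≤ ∑' n : Fin d → ℕ+, (((m:ℕ)):ℝ≥0∞)^α *
                (if (1:ℝ) ≤ ((pidx n : ℕ):ℝ) then (((pidx n : ℕ)):ℝ≥0∞)^α else 0) := by
              apply ENNReal.tsum_le_tsum
              intro n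
              have h1 : (1:ℝ) ≤ ((pidx n : ℕ):ℝ) := by exact_mod_cast (pidx_pos n)
              rw [if_pos h1]
              split_ifs with h2
              · rw [hsplit n]
              · exact zero_le
          _ = (((m:ℕ)):ℝ≥0∞)^α * ∑' n : Fin d → ℕ+,
                (if (1:ℝ) ≤ ((pidx n : ℕ):ℝ) then (((pidx n : ℕ)):ℝ≥0∞)^α else 0) :=
              ENNReal.tsum_mul_left
          _ ≤ (((m:ℕ)):ℝ≥0∞)^α * ((Cα+1)^d * ENNReal.ofReal ((1:ℝ) ^ (α+1))
                * ENNReal.ofReal (1 + Real.log 1) ^ (d-1)) :=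
              mul_le_mul_right (IH 1 le_rfl) _
          _ = (((m:ℕ)):ℝ≥0∞)^α * (Cα+1)^d := by
              simp [Real.one_rpow, Real.log_one]
      · push_neg at hm
        rw [if_neg (not_le.mpr hm), if_pos hm, zero_mul, zero_add]
        have hstep : ∀ n : Fin d → ℕ+, (if N ≤ (((m:ℕ) * pidx n : ℕ):ℝ)
              then ((((m:ℕ) * pidx n : ℕ)):ℝ≥0∞)^α else 0)
            = (((m:ℕ)):ℝ≥0∞)^α * (if N/((m:ℕ):ℝ) ≤ ((pidx n : ℕ):ℝ)
              then (((pidx n : ℕ)):ℝ≥0∞)^α else 0) := by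
          intro n
          have hiff : (N ≤ (((m:ℕ) * pidx n : ℕ):ℝ)) ↔ (N/((m:ℕ):ℝ) ≤ ((pidx n : ℕ):ℝ)) := by
            rw [div_le_iff₀ hmpos]
            push_cast
            rw [mul_comm]
          rw [if_congr hiff rfl rfl]
          split_ifs with h
          · rw [hsplit n]
          · rw [mul_zero]
        simp only [hstep]
        rw [ENNReal.tsum_mul_left]
        have hge1 : 1 ≤ N / ((m:ℕ):ℝ) := (one_le_div hmpos).mpr hm.le
        refine le_trans (mul_le_mul_right (IH (N/((m:ℕ):ℝ)) hge1) _) ?_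
        have hlog : ENNReal.ofReal (1 + Real.log (N/((m:ℕ):ℝ))) ≤ L := by
          rw [hL]
          apply ENNReal.ofReal_le_ofReal
          have hd1 : Real.log (N/((m:ℕ):ℝ)) ≤ Real.log N := by
            apply Real.log_le_log (by positivity)
            apply div_le_self hNpos.le
            exact_mod_cast m.one_le
          linarith
        have hmain : (((m:ℕ)):ℝ≥0∞)^α * ENNReal.ofReal ((N/((m:ℕ):ℝ)) ^ (α+1))
            ≤ (((m:ℕ)):ℝ≥0∞)^(-1:ℝ) * ENNReal.ofReal (N ^ (α+1)) := by
          have e1 : (((m:ℕ)):ℝ≥0∞)^α = ENNReal.ofReal (((m:ℕ):ℝ)^α) := by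
            rw [← ENNReal.ofReal_natCast (m:ℕ), ENNReal.ofReal_rpow_of_pos hmpos]
          have e2 : (((m:ℕ)):ℝ≥0∞)^(-1:ℝ) = ENNReal.ofReal (((m:ℕ):ℝ)^(-1:ℝ)) := by
            rw [← ENNReal.ofReal_natCast (m:ℕ), ENNReal.ofReal_rpow_of_pos hmpos]
          rw [e1, e2, ← ENNReal.ofReal_mul (Real.rpow_nonneg hmpos.le _),
            ← ENNReal.ofReal_mul (Real.rpow_nonneg hmpos.le _)]
          apply ENNReal.ofReal_le_ofReal
          apply le_of_eq
          rw [Real.div_rpow hNpos.le hmpos.le, Real.rpow_neg_one,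
            Real.rpow_add_one hmpos.ne' α]
          have hne : ((m:ℕ):ℝ)^α ≠ 0 := (Real.rpow_pos_of_pos hmpos α).ne'
          field_simp
        calc (((m:ℕ)):ℝ≥0∞)^α * ((Cα+1)^d * ENNReal.ofReal ((N/((m:ℕ):ℝ)) ^ (α+1))
                * ENNReal.ofReal (1 + Real.log (N/((m:ℕ):ℝ))) ^ (d-1))
            = (Cα+1)^d * ((((m:ℕ)):ℝ≥0∞)^α * ENNReal.ofReal ((N/((m:ℕ):ℝ)) ^ (α+1)))
                * ENNReal.ofReal (1 + Real.log (N/((m:ℕ):ℝ))) ^ (d-1) := by ring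
          _ ≤ (Cα+1)^d * ((((m:ℕ)):ℝ≥0∞)^(-1:ℝ) * ENNReal.ofReal (N ^ (α+1))) * L ^ (d-1) :=
              mul_le_mul' (mul_le_mul_right hmain _) (pow_le_pow_left' hlog _)
          _ = (((m:ℕ)):ℝ≥0∞)^(-1:ℝ) * ((Cα+1)^d * ENNReal.ofReal (N ^ (α+1)) * L ^ (d-1)) := by
              ring
    refine le_trans (ENNReal.tsum_le_tsum key) ?_
    rw [ENNReal.tsum_add]
    rw [ENNReal.tsum_mul_right, ENNReal.tsum_mul_right]
    have hA := base N hN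
    have hB := pnat_harmonic_le (N := N) hN
    refine le_trans (add_le_add (mul_le_mul_left hA _) (mul_le_mul_left hB _)) ?_
    rw [← hL]
    have hdd : d - 1 + 1 = d := Nat.succ_pred_eq_of_pos hd
    have hLpow : L * L ^ (d-1) = L ^ d := by
      rw [← pow_succ', hdd]
    have hCle : Cα ≤ Cα * L ^ d := le_mul_of_one_le_right' (one_le_pow_of_one_le' hL1 d)
    calc Cα * ENNReal.ofReal (N ^ (α+1)) * (Cα+1)^d
          + L * ((Cα+1)^d * ENNReal.ofReal (N ^ (α+1)) * L ^ (d-1))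
        = (Cα+1)^d * ENNReal.ofReal (N ^ (α+1)) * Cα
          + (Cα+1)^d * ENNReal.ofReal (N ^ (α+1)) * (L * L ^ (d-1)) := by ring
      _ ≤ (Cα+1)^d * ENNReal.ofReal (N ^ (α+1)) * (Cα * L ^ d)
          + (Cα+1)^d * ENNReal.ofReal (N ^ (α+1)) * L ^ d := by
          rw [hLpow]
          exact add_le_add (mul_le_mul_right hCle _) le_rfl
      _ = (Cα+1)^(d+1) * ENNReal.ofReal (N ^ (α+1)) * L ^ d := by ring
      _ = (Cα+1)^(d+1) * ENNReal.ofReal (N ^ (α+1)) * L ^ (d+1-1) := by norm_num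

lemma sum_odd (c : ℕ) : ∑ j ∈ Finset.range c, (2*j+1) = c^2 := by
  induction c with
  | zero => simp
  | succ n ih => rw [Finset.sum_range_succ, ih]; ring

lemma ptwise {t aa : ℝ} (ht : 0 ≤ t) (hta : t ≤ aa) (J : ℕ) (hJ : aa < J+1) :
    ENNReal.ofReal (t^2) ≤ ∑ j ∈ Finset.range (J+1),
      ENNReal.ofReal (2*(j:ℝ)+1) * (if (j:ℝ) < t then 1 else 0) := by
  set c := ⌈t⌉₊ with hc
  have hcJ : c ≤ J + 1 := Nat.ceil_le.mpr (by push_cast; linarith)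
  calc ENNReal.ofReal (t^2)
      ≤ ENNReal.ofReal ((c:ℝ)^2) := by
        apply ENNReal.ofReal_le_ofReal
        have h1 := Nat.le_ceil t
        nlinarith [h1]
    _ = ∑ j ∈ Finset.range c, ENNReal.ofReal (2*(j:ℝ)+1) := by
        rw [← ENNReal.ofReal_sum_of_nonneg (fun j _ => by positivity)]
        congr 1
        have h2 := sum_odd c
        have : ∑ j ∈ Finset.range c, (2*(j:ℝ)+1) = ((∑ j ∈ Finset.range c, (2*j+1) : ℕ) : ℝ) := by
          push_cast
          apply Finset.sum_congr rfl; intro x _; ring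
        rw [this, h2]; push_cast; ring
    _ = ∑ j ∈ Finset.range c, ENNReal.ofReal (2*(j:ℝ)+1) * (if (j:ℝ) < t then 1 else 0) := by
        apply Finset.sum_congr rfl
        intro j hj
        rw [Finset.mem_range] at hj
        rw [if_pos (Nat.lt_ceil.mp hj), mul_one]
    _ ≤ ∑ j ∈ Finset.range (J+1), ENNReal.ofReal (2*(j:ℝ)+1) * (if (j:ℝ) < t then 1 else 0) :=
        Finset.sum_le_sum_of_subset (Finset.range_subset_range.mpr hcJ)

lemma integral_sq_le {Ω : Type*} [MeasurableSpace Ω] (P : Measure Ω) (f : Ω → ℝ)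
    (hf : Measurable f) {aa : ℝ} (ha : 0 ≤ aa) (J : ℕ) (hJ : aa < J+1) :
    ∫⁻ ω in {ω | |f ω| ≤ aa}, ENNReal.ofReal (f ω ^ 2) ∂P
      ≤ ∑ j ∈ Finset.range (J+1), ENNReal.ofReal (2*(j:ℝ)+1) * P {ω | (j:ℝ) < |f ω|} := by
  have hs : MeasurableSet {ω | |f ω| ≤ aa} := measurableSet_le hf.abs measurable_const
  have hsj : ∀ j : ℕ, MeasurableSet {ω | (j:ℝ) < |f ω|} :=
    fun j => measurableSet_lt measurable_const hf.abs
  rw [← lintegral_indicator hs]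
  calc ∫⁻ ω, Set.indicator {ω | |f ω| ≤ aa} (fun ω => ENNReal.ofReal (f ω^2)) ω ∂P
      ≤ ∫⁻ ω, ∑ j ∈ Finset.range (J+1), ENNReal.ofReal (2*(j:ℝ)+1) *
          Set.indicator {ω | (j:ℝ) < |f ω|} (fun _ => 1) ω ∂P := by
        apply lintegral_mono
        intro ω
        dsimp only
        by_cases hω : |f ω| ≤ aa
        · rw [Set.indicator_of_mem (show ω ∈ {ω | |f ω| ≤ aa} from hω)]
          have h := ptwise (abs_nonneg (f ω)) hω J hJ
          rw [sq_abs] at h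
          refine le_trans h (le_of_eq (Finset.sum_congr rfl fun j _ => ?_))
          simp [Set.indicator_apply, Set.mem_setOf_eq]
        · rw [Set.indicator_of_notMem (show ω ∉ {ω | |f ω| ≤ aa} from hω)]
          exact zero_le
    _ = ∑ j ∈ Finset.range (J+1), ENNReal.ofReal (2*(j:ℝ)+1) * P {ω | (j:ℝ) < |f ω|} := by
        rw [lintegral_finset_sum]
        · apply Finset.sum_congr rfl
          intro j _
          rw [lintegral_const_mul _ (measurable_const.indicator (hsj j))]
          congr 1
          rw [lintegral_indicator (hsj j)]
          simp
        · intro j _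
          exact (measurable_const.indicator (hsj j)).const_mul _

lemma cast_rpow_ofReal {m : ℕ} (hm : 0 < m) (α : ℝ) :
    ((m:ℝ≥0∞)) ^ α = ENNReal.ofReal ((m:ℝ) ^ α) := by
  rw [← ENNReal.ofReal_natCast, ENNReal.ofReal_rpow_of_pos (by exact_mod_cast hm)]

theorem stmt9 {Ω : Type*} [MeasurableSpace Ω] (P : Measure Ω) [IsProbabilityMeasure P]
    {d : ℕ} (hd : 1 ≤ d)
    (X : (Fin d → ℕ+) → Ω → ℝ) (Y : Ω → ℝ)
    (hX : ∀ k, Measurable (X k)) (hY : Measurable Y)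
    (M : ℝ) (hM : 0 ≤ M)
    (hMD : ∀ x : ℝ, 0 ≤ x → ∀ n : Fin d → ℕ+,
      ∑ k ∈ Finset.Icc 1 n, P {ω : Ω | x < |X k ω|}
        ≤ (pidx n : ℝ≥0∞) * ENNReal.ofReal M * P {ω : Ω | x < |Y ω|})
    (p r : ℝ) (hp1 : 1 ≤ p) (hp2 : p < 2) (hr1 : 1 ≤ r) (hrp : r ≤ p)
    (hmom : ∫⁻ ω, ENNReal.ofReal (|Y ω| ^ p * (max 1 (Real.log |Y ω|)) ^ (d - 1)) ∂P < ∞) :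
    ∑' n : Fin d → ℕ+,
      ENNReal.ofReal ((pidx n : ℝ) ^ ((p - 2) / r - 2)) *
        ∑ k ∈ Finset.Icc 1 n,
          ∫⁻ ω in {ω : Ω | |X k ω| ≤ (pidx n : ℝ) ^ (1 / r)},
            ENNReal.ofReal (X k ω ^ 2) ∂P < ∞ := by
  classical
  have hr0 : (0:ℝ) < r := lt_of_lt_of_le one_pos hr1
  set α : ℝ := (p-2)/r - 1 with hαdef
  have hα : α < -1 := by
    have h1 : (p-2)/r < 0 := div_neg_of_neg_of_pos (by linarith) hr0
    simp only [hαdef]; linarith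
  set CC : ℝ≥0∞ := (ENNReal.ofReal (1 + (-α - 1)⁻¹) + 1) ^ d with hCC
  have hCCne : CC ≠ ∞ := by
    rw [hCC]
    exact ENNReal.pow_ne_top (by simp [ENNReal.add_ne_top])
  have hw1 : ∀ n : Fin d → ℕ+, (1:ℝ) ≤ ((pidx n : ℕ):ℝ) := fun n => by
    exact_mod_cast pidx_pos n
  set aa : (Fin d → ℕ+) → ℝ := fun n => ((pidx n : ℕ):ℝ) ^ (1/r) with haadef
  have haa1 : ∀ n, (1:ℝ) ≤ aa n := fun n => Real.one_le_rpow (hw1 n) (by positivity)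
  set J : (Fin d → ℕ+) → ℕ := fun n => ⌊aa n⌋₊ with hJdef
  have haaJ : ∀ n, aa n < (J n : ℝ) + 1 := fun n => Nat.lt_floor_add_one _
  set c : ℕ → ℝ≥0∞ := fun j => ENNReal.ofReal (2*(j:ℝ)+1) * P {ω | (j:ℝ) < |Y ω|} with hcdef
  -- Step A
  have stepA : ∀ n : Fin d → ℕ+,
      ENNReal.ofReal (((pidx n:ℕ):ℝ) ^ ((p - 2) / r - 2)) *
        ∑ k ∈ Finset.Icc 1 n,
          ∫⁻ ω in {ω | |X k ω| ≤ ((pidx n:ℕ):ℝ) ^ (1 / r)}, ENNReal.ofReal (X k ω ^ 2) ∂P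
      ≤ ENNReal.ofReal M *
          ∑ j ∈ Finset.range (J n + 1),
            (ENNReal.ofReal (((pidx n:ℕ):ℝ) ^ α) * c j) := by
    intro n
    have h1 : ∑ k ∈ Finset.Icc 1 n, ∫⁻ ω in {ω | |X k ω| ≤ aa n}, ENNReal.ofReal (X k ω ^ 2) ∂P
        ≤ ∑ j ∈ Finset.range (J n + 1), ENNReal.ofReal (2*(j:ℝ)+1) *
            ∑ k ∈ Finset.Icc 1 n, P {ω | (j:ℝ) < |X k ω|} := by
      calc ∑ k ∈ Finset.Icc 1 n, ∫⁻ ω in {ω | |X k ω| ≤ aa n}, ENNReal.ofReal (X k ω ^ 2) ∂P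
          ≤ ∑ k ∈ Finset.Icc 1 n, ∑ j ∈ Finset.range (J n + 1),
              ENNReal.ofReal (2*(j:ℝ)+1) * P {ω | (j:ℝ) < |X k ω|} :=
            Finset.sum_le_sum fun k _ => integral_sq_le P (X k) (hX k)
              (le_trans zero_le_one (haa1 n)) (J n) (haaJ n)
        _ = _ := by
            rw [Finset.sum_comm]
            exact Finset.sum_congr rfl fun j _ => (Finset.mul_sum _ _ _).symm
    have h2 : ∀ j:ℕ, ∑ k ∈ Finset.Icc 1 n, P {ω | (j:ℝ) < |X k ω|}
        ≤ ((pidx n:ℕ) : ℝ≥0∞) * ENNReal.ofReal M * P {ω | (j:ℝ) < |Y ω|} :=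
      fun j => hMD j (Nat.cast_nonneg j) n
    have hcoef : ENNReal.ofReal (((pidx n:ℕ):ℝ) ^ ((p-2)/r - 2)) * ((pidx n:ℕ) : ℝ≥0∞)
        = ENNReal.ofReal (((pidx n:ℕ):ℝ) ^ α) := by
      have hwpos : (0:ℝ) < ((pidx n:ℕ):ℝ) := lt_of_lt_of_le one_pos (hw1 n)
      rw [← ENNReal.ofReal_natCast, ← ENNReal.ofReal_mul (Real.rpow_nonneg hwpos.le _),
        ← Real.rpow_add_one hwpos.ne']
      congr 1
      rw [hαdef]
      ring_nf
    calc ENNReal.ofReal (((pidx n:ℕ):ℝ) ^ ((p - 2) / r - 2)) *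
          ∑ k ∈ Finset.Icc 1 n,
            ∫⁻ ω in {ω | |X k ω| ≤ ((pidx n:ℕ):ℝ) ^ (1 / r)}, ENNReal.ofReal (X k ω ^ 2) ∂P
        ≤ ENNReal.ofReal (((pidx n:ℕ):ℝ) ^ ((p - 2) / r - 2)) *
            ∑ j ∈ Finset.range (J n + 1), ENNReal.ofReal (2*(j:ℝ)+1) *
              (((pidx n:ℕ) : ℝ≥0∞) * ENNReal.ofReal M * P {ω | (j:ℝ) < |Y ω|}) := by
          apply mul_le_mul_right
          refine le_trans h1 (Finset.sum_le_sum fun j _ => mul_le_mul_right (h2 j) _)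
      _ = ENNReal.ofReal M * ∑ j ∈ Finset.range (J n + 1),
            (ENNReal.ofReal (((pidx n:ℕ):ℝ) ^ α) * c j) := by
          rw [Finset.mul_sum, Finset.mul_sum]
          apply Finset.sum_congr rfl
          intro j _
          rw [hcdef, ← hcoef]
          ring
  set V : ℕ → ℝ≥0∞ := fun j => ∑' n : Fin d → ℕ+,
    (if j ≤ J n then ENNReal.ofReal (((pidx n:ℕ):ℝ) ^ α) else 0) with hVdef
  have stepC : ∑' n : Fin d → ℕ+,
      ∑ j ∈ Finset.range (J n + 1), (ENNReal.ofReal (((pidx n:ℕ):ℝ) ^ α) * c j)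
      = ∑' j : ℕ, V j * c j := by
    have per_n : ∀ n : Fin d → ℕ+,
        ∑ j ∈ Finset.range (J n + 1), (ENNReal.ofReal (((pidx n:ℕ):ℝ) ^ α) * c j)
        = ∑' j : ℕ, (if j ≤ J n then ENNReal.ofReal (((pidx n:ℕ):ℝ) ^ α) else 0) * c j := by
      intro n
      rw [tsum_eq_sum (s := Finset.range (J n + 1)) ?_]
      · apply Finset.sum_congr rfl
        intro j hj
        rw [if_pos (Nat.lt_succ_iff.mp (Finset.mem_range.mp hj))]
      · intro j hj
        rw [if_neg, zero_mul]
        intro hle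
        exact hj (Finset.mem_range.mpr (Nat.lt_succ_of_le hle))
    simp only [per_n]
    rw [ENNReal.tsum_comm]
    exact tsum_congr fun j => ENNReal.tsum_mul_right
  have hV0 : V 0 ≤ CC := by
    have hmt := multi_tail_le hα d hd 1 le_rfl
    simp only [Real.one_rpow, Real.log_one, add_zero, ENNReal.ofReal_one, one_pow, mul_one] at hmt
    refine le_trans ?_ hmt
    apply ENNReal.tsum_le_tsum
    intro n
    rw [if_pos (Nat.zero_le _), if_pos (hw1 n), cast_rpow_ofReal (pidx_pos n)]
  have hVsucc : ∀ j : ℕ, V (j+1) ≤ CC * ENNReal.ofReal (((j:ℝ)+1) ^ (p-2)) *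
      ENNReal.ofReal (1 + r * Real.log ((j:ℝ)+1)) ^ (d-1) := by
    intro j
    have hj0 : (0:ℝ) ≤ (j:ℝ) := Nat.cast_nonneg j
    have hj1 : (1:ℝ) ≤ (j:ℝ)+1 := by linarith
    have hNj : (1:ℝ) ≤ ((j:ℝ)+1) ^ r := Real.one_le_rpow hj1 hr0.le
    have hmt := multi_tail_le hα d hd (((j:ℝ)+1)^r) hNj
    have e1 : ((((j:ℝ)+1)^r)^(α+1)) = ((j:ℝ)+1)^(p-2) := by
      rw [← Real.rpow_mul (by linarith)]
      congr 1
      rw [hαdef]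
      field_simp
      ring
    have e2 : Real.log (((j:ℝ)+1)^r) = r * Real.log ((j:ℝ)+1) := Real.log_rpow (by linarith) r
    rw [e1, e2] at hmt
    refine le_trans ?_ hmt
    apply ENNReal.tsum_le_tsum
    intro n
    by_cases hcond : (j+1) ≤ J n
    · have hle : ((j:ℝ)+1) ≤ aa n := by
        have h3 := (Nat.le_floor_iff (le_trans zero_le_one (haa1 n))).mp hcond
        push_cast at h3
        exact h3
      have hc2 : (((j:ℝ)+1)^r) ≤ ((pidx n:ℕ):ℝ) := by
        calc (((j:ℝ)+1)^r) ≤ (aa n)^r := Real.rpow_le_rpow (by linarith) hle hr0.le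
          _ = ((pidx n:ℕ):ℝ) := by
              rw [haadef]
              dsimp only
              rw [← Real.rpow_mul (le_trans zero_le_one (hw1 n)),
                one_div_mul_cancel hr0.ne', Real.rpow_one]
      rw [if_pos hcond, if_pos hc2, cast_rpow_ofReal (pidx_pos n)]
    · rw [if_neg hcond]
      exact zero_le
  have stepE : ∑' j : ℕ, V j * c j ≤ CC + ∑' j : ℕ, V (j+1) * c (j+1) := by
    rw [tsum_eq_zero_add' ENNReal.summable]
    refine add_le_add ?_ le_rfl
    have hc0 : c 0 ≤ 1 := by
      rw [hcdef]
      calc ENNReal.ofReal (2*((0:ℕ):ℝ)+1) * P {ω | ((0:ℕ):ℝ) < |Y ω|}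
          ≤ 1 * 1 := by
            apply mul_le_mul'
            · norm_num
            · exact prob_le_one
        _ = 1 := one_mul 1
    calc V 0 * c 0 ≤ CC * 1 := mul_le_mul' hV0 hc0
      _ = CC := mul_one CC
  set KK : ℝ≥0∞ := CC * ENNReal.ofReal (3 * (2*r)^(d-1)) with hKKdef
  have stepF : ∀ j : ℕ, V (j+1) * c (j+1) ≤ KK *
      (ENNReal.ofReal (((j:ℝ)+1)^(p-1) * (max 1 (Real.log ((j:ℝ)+1)))^(d-1)) *
        P {ω | ((j:ℝ)+1) < |Y ω|}) := by
    intro j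
    have hj0 : (0:ℝ) ≤ (j:ℝ) := Nat.cast_nonneg j
    have hj1 : (1:ℝ) ≤ (j:ℝ)+1 := by linarith
    have hc1 : c (j+1) = ENNReal.ofReal (2*((j:ℝ)+1)+1) * P {ω | ((j:ℝ)+1) < |Y ω|} := by
      rw [hcdef]
      push_cast
      rfl
    rw [hc1]
    refine le_trans (mul_le_mul' (hVsucc j) le_rfl) ?_
    have hl : (0:ℝ) ≤ Real.log ((j:ℝ)+1) := Real.log_nonneg hj1
    set l := Real.log ((j:ℝ)+1) with hldef
    set mx := max 1 l with hmxdef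
    have hmx1 : (1:ℝ) ≤ mx := le_max_left 1 l
    have hlmx : l ≤ mx := le_max_right 1 l
    have hBnn : (0:ℝ) ≤ (1 + r*l)^(d-1) := by positivity
    have hreal : (((j:ℝ)+1) ^ (p-2)) * (1 + r * l)^(d-1) * (2*((j:ℝ)+1)+1)
        ≤ 3 * (2*r)^(d-1) * (((j:ℝ)+1)^(p-1) * mx^(d-1)) := by
      have hA : (0:ℝ) ≤ ((j:ℝ)+1)^(p-2) := Real.rpow_nonneg (by linarith) _
      have h1 : (1 + r*l) ≤ 2*r*mx := by nlinarith
      have h2 : ((1 + r*l):ℝ)^(d-1) ≤ (2*r*mx)^(d-1) := pow_le_pow_left₀ (by positivity) h1 _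
      have h3 : (2*((j:ℝ)+1)+1) ≤ 3*((j:ℝ)+1) := by linarith
      have h4 : ((j:ℝ)+1)^(p-2) * ((j:ℝ)+1) = ((j:ℝ)+1)^(p-1) := by
        rw [← Real.rpow_add_one (by positivity : ((j:ℝ)+1) ≠ 0)]
        congr 1
        ring
      calc (((j:ℝ)+1) ^ (p-2)) * (1 + r * l)^(d-1) * (2*((j:ℝ)+1)+1)
          ≤ (((j:ℝ)+1) ^ (p-2)) * (1 + r * l)^(d-1) * (3*((j:ℝ)+1)) := by
            apply mul_le_mul_of_nonneg_left h3 (by positivity)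
        _ ≤ (((j:ℝ)+1) ^ (p-2)) * ((2*r*mx)^(d-1)) * (3*((j:ℝ)+1)) := by
            apply mul_le_mul_of_nonneg_right (mul_le_mul_of_nonneg_left h2 hA) (by positivity)
        _ = 3 * (2*r)^(d-1) * (((j:ℝ)+1)^(p-1) * mx^(d-1)) := by
            rw [mul_pow, ← h4]
            ring
    calc CC * ENNReal.ofReal (((j:ℝ)+1) ^ (p-2)) * ENNReal.ofReal (1 + r * l) ^ (d-1)
          * (ENNReal.ofReal (2*((j:ℝ)+1)+1) * P {ω | ((j:ℝ)+1) < |Y ω|})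
        = CC * ENNReal.ofReal ((((j:ℝ)+1) ^ (p-2)) * (1 + r * l)^(d-1) * (2*((j:ℝ)+1)+1))
          * P {ω | ((j:ℝ)+1) < |Y ω|} := by
          have hA' : (0:ℝ) ≤ ((j:ℝ)+1)^(p-2) := Real.rpow_nonneg (by linarith) _
          rw [ENNReal.ofReal_mul (mul_nonneg hA' hBnn), ENNReal.ofReal_mul hA',
            ENNReal.ofReal_pow (by positivity)]
          ring
      _ ≤ CC * ENNReal.ofReal (3 * (2*r)^(d-1) * (((j:ℝ)+1)^(p-1) * mx^(d-1)))
          * P {ω | ((j:ℝ)+1) < |Y ω|} := by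
          exact mul_le_mul' (mul_le_mul_right (ENNReal.ofReal_le_ofReal hreal) _) le_rfl
      _ = KK * (ENNReal.ofReal (((j:ℝ)+1)^(p-1) * mx^(d-1)) * P {ω | ((j:ℝ)+1) < |Y ω|}) := by
          rw [hKKdef, ENNReal.ofReal_mul (by positivity)]
          ring
  have hfinal : ∑' j : ℕ,
      (ENNReal.ofReal (((j:ℝ)+1)^(p-1) * (max 1 (Real.log ((j:ℝ)+1)))^(d-1)) *
        P {ω | ((j:ℝ)+1) < |Y ω|})
      ≤ ∫⁻ ω, ENNReal.ofReal (|Y ω| ^ p * (max 1 (Real.log |Y ω|)) ^ (d - 1)) ∂P := by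
    have hmeas : ∀ j:ℕ, MeasurableSet {ω | ((j:ℝ)+1) < |Y ω|} :=
      fun j => measurableSet_lt measurable_const hY.abs
    have hrw : ∀ j:ℕ, ENNReal.ofReal (((j:ℝ)+1)^(p-1) * (max 1 (Real.log ((j:ℝ)+1)))^(d-1)) *
        P {ω | ((j:ℝ)+1) < |Y ω|}
        = ∫⁻ ω, Set.indicator {ω | ((j:ℝ)+1) < |Y ω|}
            (fun _ => ENNReal.ofReal (((j:ℝ)+1)^(p-1) * (max 1 (Real.log ((j:ℝ)+1)))^(d-1))) ω ∂P := by
      intro j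
      rw [lintegral_indicator (hmeas j), setLIntegral_const]
    simp only [hrw]
    rw [← lintegral_tsum (fun j => (measurable_const.indicator (hmeas j)).aemeasurable)]
    apply lintegral_mono
    intro ω
    by_cases hy : |Y ω| ≤ 1
    · have hz : ∀ j:ℕ, Set.indicator {ω | ((j:ℝ)+1) < |Y ω|}
          (fun _ => ENNReal.ofReal (((j:ℝ)+1)^(p-1) * (max 1 (Real.log ((j:ℝ)+1)))^(d-1))) ω = 0 := by
        intro j
        apply Set.indicator_of_notMem
        intro hmem
        have hj0 : (0:ℝ) ≤ (j:ℝ) := Nat.cast_nonneg j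
        have : ((j:ℝ)+1) < |Y ω| := hmem
        linarith
      simp only [hz, tsum_zero]
      exact zero_le
    · push_neg at hy
      have hynn : (0:ℝ) < |Y ω| := by linarith
      have hterm : ∀ j:ℕ, Set.indicator {ω | ((j:ℝ)+1) < |Y ω|}
          (fun _ => ENNReal.ofReal (((j:ℝ)+1)^(p-1) * (max 1 (Real.log ((j:ℝ)+1)))^(d-1))) ω
          ≤ ENNReal.ofReal (|Y ω|^(p-1) * (max 1 (Real.log |Y ω|))^(d-1)) *
            Set.indicator {ω | ((j:ℝ)+1) < |Y ω|} (fun _ => (1:ℝ≥0∞)) ω := by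
        intro j
        have hj0 : (0:ℝ) ≤ (j:ℝ) := Nat.cast_nonneg j
        by_cases hmem : ω ∈ {ω | ((j:ℝ)+1) < |Y ω|}
        · rw [Set.indicator_of_mem hmem, Set.indicator_of_mem hmem, mul_one]
          apply ENNReal.ofReal_le_ofReal
          have hjy : ((j:ℝ)+1) < |Y ω| := hmem
          have e1 : ((j:ℝ)+1)^(p-1) ≤ |Y ω|^(p-1) :=
            Real.rpow_le_rpow (by linarith) hjy.le (by linarith)
          have e2 : (max 1 (Real.log ((j:ℝ)+1)))^(d-1) ≤ (max 1 (Real.log |Y ω|))^(d-1) := by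
            apply pow_le_pow_left₀ (by positivity)
            exact max_le_max le_rfl (Real.log_le_log (by linarith) hjy.le)
          apply mul_le_mul e1 e2 (by positivity) (Real.rpow_nonneg hynn.le _)
        · rw [Set.indicator_of_notMem hmem, Set.indicator_of_notMem hmem, mul_zero]
      refine le_trans (ENNReal.tsum_le_tsum hterm) ?_
      rw [ENNReal.tsum_mul_left]
      have hcount : ∑' j:ℕ, Set.indicator {ω | ((j:ℝ)+1) < |Y ω|} (fun _ => (1:ℝ≥0∞)) ω
          ≤ ENNReal.ofReal |Y ω| := by
        rw [tsum_eq_sum (s := Finset.range ⌊|Y ω|⌋₊) ?_]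
        · calc ∑ j ∈ Finset.range ⌊|Y ω|⌋₊,
                Set.indicator {ω | ((j:ℝ)+1) < |Y ω|} (fun _ => (1:ℝ≥0∞)) ω
              ≤ ∑ _j ∈ Finset.range ⌊|Y ω|⌋₊, (1:ℝ≥0∞) := by
                apply Finset.sum_le_sum
                intro i _
                by_cases hmem : ω ∈ {ω | ((i:ℝ)+1) < |Y ω|}
                · rw [Set.indicator_of_mem hmem]
                · rw [Set.indicator_of_notMem hmem]
                  exact zero_le_one
            _ = (⌊|Y ω|⌋₊ : ℝ≥0∞) := by simp
            _ ≤ ENNReal.ofReal |Y ω| := by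
                rw [← ENNReal.ofReal_natCast]
                exact ENNReal.ofReal_le_ofReal (Nat.floor_le hynn.le)
        · intro j hj
          apply Set.indicator_of_notMem
          intro hmem
          apply hj
          rw [Finset.mem_range]
          have hjy : ((j:ℝ)+1) < |Y ω| := hmem
          have : (j+1 : ℕ) ≤ ⌊|Y ω|⌋₊ := Nat.le_floor (by push_cast; linarith)
          omega
      refine le_trans (mul_le_mul_right hcount _) ?_
      rw [← ENNReal.ofReal_mul (by positivity)]
      apply ENNReal.ofReal_le_ofReal
      have h6 : |Y ω|^(p-1) * |Y ω| = |Y ω|^p := by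
        rw [← Real.rpow_add_one (ne_of_gt hynn) (p-1)]
        norm_num
      apply le_of_eq
      calc |Y ω|^(p-1) * (max 1 (Real.log |Y ω|))^(d-1) * |Y ω|
          = (|Y ω|^(p-1) * |Y ω|) * (max 1 (Real.log |Y ω|))^(d-1) := by ring
        _ = |Y ω|^p * (max 1 (Real.log |Y ω|))^(d-1) := by rw [h6]
  -- final assembly
  have hMne : ENNReal.ofReal M ≠ ∞ := ENNReal.ofReal_ne_top
  have hKKne : KK ≠ ∞ := by
    rw [hKKdef]
    exact ENNReal.mul_ne_top hCCne ENNReal.ofReal_ne_top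
  calc ∑' n : Fin d → ℕ+,
        ENNReal.ofReal ((pidx n : ℝ) ^ ((p - 2) / r - 2)) *
          ∑ k ∈ Finset.Icc 1 n,
            ∫⁻ ω in {ω : Ω | |X k ω| ≤ (pidx n : ℝ) ^ (1 / r)},
              ENNReal.ofReal (X k ω ^ 2) ∂P
      ≤ ∑' n : Fin d → ℕ+, (ENNReal.ofReal M *
          ∑ j ∈ Finset.range (J n + 1), (ENNReal.ofReal (((pidx n:ℕ):ℝ) ^ α) * c j)) :=
        ENNReal.tsum_le_tsum stepA
    _ = ENNReal.ofReal M * ∑' j : ℕ, V j * c j := by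
        rw [ENNReal.tsum_mul_left, stepC]
    _ ≤ ENNReal.ofReal M * (CC + ∑' j : ℕ, V (j+1) * c (j+1)) := mul_le_mul_right stepE _
    _ ≤ ENNReal.ofReal M * (CC + KK *
          ∫⁻ ω, ENNReal.ofReal (|Y ω| ^ p * (max 1 (Real.log |Y ω|)) ^ (d - 1)) ∂P) := by
        apply mul_le_mul_right
        apply add_le_add le_rfl
        calc ∑' j : ℕ, V (j+1) * c (j+1)
            ≤ ∑' j : ℕ, KK * (ENNReal.ofReal (((j:ℝ)+1)^(p-1) *
                (max 1 (Real.log ((j:ℝ)+1)))^(d-1)) * P {ω | ((j:ℝ)+1) < |Y ω|}) :=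
              ENNReal.tsum_le_tsum stepF
          _ = KK * ∑' j : ℕ, (ENNReal.ofReal (((j:ℝ)+1)^(p-1) *
                (max 1 (Real.log ((j:ℝ)+1)))^(d-1)) * P {ω | ((j:ℝ)+1) < |Y ω|}) :=
              ENNReal.tsum_mul_left
          _ ≤ KK * ∫⁻ ω, ENNReal.ofReal (|Y ω| ^ p * (max 1 (Real.log |Y ω|)) ^ (d - 1)) ∂P :=
              mul_le_mul_right hfinal _
    _ < ∞ := by
        apply ENNReal.mul_lt_top hMne.lt_top
        apply ENNReal.add_lt_top.mpr
        exact ⟨hCCne.lt_top, ENNReal.mul_lt_top hKKne.lt_top hmom⟩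
end

section
/- For a random variable X with E[|X| (log⁺|X|)^d] < ∞, the series ∑_{j=1}^∞ j^{-1} ∫_j^∞ (log⁺ x)^{d-1} P(|X| > x) dx is finite; indeed it is bounded by a constant times E[|X|(log⁺|X|)^d]. -/
/-!
Writing each `∫_j^∞` as an integral over `(0, ∞)` against the indicator of `(j, ∞)` and
interchanging sum and integral, the weight in front of `(log⁺ x)^(d-1) P(|X| > x)` becomes the
harmonic sum `∑_{j < x} 1/j ≤ 1 + log ⌊x⌋ ≤ 2 log⁺ x`. What remains is
`2 ∫_0^∞ (log⁺ x)^d P(|X| > x) dx`, which by the layer cake formula equals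
`2 E[∫_0^|X| (log⁺ t)^d dt] ≤ 2 E[|X| (log⁺|X|)^d]`, since `log⁺` is monotone.
-/

open MeasureTheory ENNReal Set

lemma monotoneOn_max_one_log : MonotoneOn (fun t : ℝ => max 1 (Real.log t)) (Ici 0) := by
  intro a ha b _ hab
  rcases (mem_Ici.1 ha).eq_or_lt with rfl | ha
  · simp
  · exact max_le_max le_rfl (Real.log_le_log ha hab)

lemma intervalIntegral_le_mul_of_monotoneOn {g : ℝ → ℝ} {s : ℝ} (hs : 0 ≤ s)
    (hg : MonotoneOn g (Icc 0 s)) : ∫ t in (0:ℝ)..s, g t ≤ s * g s := by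
  have hg' : MonotoneOn g (uIcc 0 s) := by rwa [uIcc_of_le hs]
  calc ∫ t in (0:ℝ)..s, g t ≤ ∫ _ in (0:ℝ)..s, g s :=
        intervalIntegral.integral_mono_on hs hg'.intervalIntegrable intervalIntegrable_const
          fun t ht => hg ht (right_mem_Icc.2 hs) ht.2
    _ = s * g s := by simp

lemma lintegral_meas_lt_mul_le_of_monotoneOn {α : Type*} [MeasurableSpace α] (μ : Measure α)
    {f : α → ℝ} {g : ℝ → ℝ} (hf0 : 0 ≤ f) (hf : AEMeasurable f μ) (hg : MonotoneOn g (Ici 0))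
    (hg0 : 0 ≤ g 0) :
    ∫⁻ t in Ioi 0, μ {a | t < f a} * ENNReal.ofReal (g t)
      ≤ ∫⁻ a, ENNReal.ofReal (f a * g (f a)) ∂μ := by
  have hg_nonneg : ∀ t ∈ Ioi (0:ℝ), 0 ≤ g t :=
    fun t ht => hg0.trans (hg self_mem_Ici (mem_Ici.2 (le_of_lt ht)) (le_of_lt ht))
  rw [← lintegral_comp_eq_lintegral_meas_lt_mul μ (ae_of_all _ hf0) hf
    (fun t ht => (hg.mono (uIcc_of_le ht.le ▸ Icc_subset_Ici_self)).intervalIntegrable)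
    ((ae_restrict_iff' measurableSet_Ioi).2 (ae_of_all _ hg_nonneg))]
  gcongr with a
  exact intervalIntegral_le_mul_of_monotoneOn (hf0 a) (hg.mono Icc_subset_Ici_self)

lemma harmonic_floor_le (x : ℝ) : (harmonic ⌊x⌋₊ : ℝ) ≤ 2 * max 1 (Real.log x) := by
  have hlog : Real.log ⌊x⌋₊ ≤ max 1 (Real.log x) := by
    rcases (Nat.zero_le ⌊x⌋₊).eq_or_lt with h | h
    · simp [← h]
    · have hx : 1 ≤ x := Nat.floor_pos.1 h
      exact le_max_of_le_right
        (Real.log_le_log (by exact_mod_cast h) (Nat.floor_le (by linarith)))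
  linarith [harmonic_le_one_add_log ⌊x⌋₊, le_max_left 1 (Real.log x)]

lemma sum_range_floor_inv_succ_le (x : ℝ) :
    ∑ i ∈ Finset.range ⌊x⌋₊, ((i + 1 : ℕ) : ℝ≥0∞)⁻¹ ≤ 2 * ENNReal.ofReal (max 1 (Real.log x)) := by
  have hsum : ∑ i ∈ Finset.range ⌊x⌋₊, ((i + 1 : ℕ) : ℝ≥0∞)⁻¹
      = ENNReal.ofReal (harmonic ⌊x⌋₊) := by
    rw [harmonic, Rat.cast_sum, ENNReal.ofReal_sum_of_nonneg (fun i _ => by positivity)]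
    refine Finset.sum_congr rfl fun i _ => ?_
    rw [Rat.cast_inv, Rat.cast_natCast, ENNReal.ofReal_inv_of_pos (by positivity),
      ENNReal.ofReal_natCast]
  rw [hsum, ← ENNReal.ofReal_ofNat 2, ← ENNReal.ofReal_mul zero_le_two]
  exact ENNReal.ofReal_le_ofReal (harmonic_floor_le x)

lemma tsum_inv_mul_indicator_Ioi_le (f : ℝ → ℝ≥0∞) (x : ℝ) :
    ∑' j : ℕ+, ((j : ℕ) : ℝ≥0∞)⁻¹ * (Ioi ((j : ℕ) : ℝ)).indicator f x
      ≤ (Ioi 0).indicator (fun y => 2 * ENNReal.ofReal (max 1 (Real.log y)) * f y) x := by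
  have hfinite : ∑' j : ℕ+, ((j : ℕ) : ℝ≥0∞)⁻¹ * (Ioi ((j : ℕ) : ℝ)).indicator f x
      = ∑ i ∈ Finset.range ⌊x⌋₊,
          ((i + 1 : ℕ) : ℝ≥0∞)⁻¹ * (Ioi ((i + 1 : ℕ) : ℝ)).indicator f x := by
    rw [tsum_pnat_eq_tsum_succ (f := fun n => (n : ℝ≥0∞)⁻¹ * (Ioi (n : ℝ)).indicator f x)]
    refine tsum_eq_sum fun i hi => ?_
    have hxi : x ∉ Ioi ((i + 1 : ℕ) : ℝ) := by
      have hlt : x < ((i + 1 : ℕ) : ℝ) :=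
        (Nat.floor_lt' i.succ_ne_zero).1 (Nat.lt_succ_of_le (not_lt.1 (Finset.mem_range.not.1 hi)))
      exact fun h => lt_asymm h hlt
    rw [indicator_of_notMem hxi, mul_zero]
  rw [hfinite]
  by_cases hx : 0 < x
  · rw [indicator_of_mem (mem_Ioi.2 hx)]
    calc _ ≤ ∑ i ∈ Finset.range ⌊x⌋₊, ((i + 1 : ℕ) : ℝ≥0∞)⁻¹ * f x := by
          gcongr
          exact indicator_le_self _ _ x
      _ ≤ 2 * ENNReal.ofReal (max 1 (Real.log x)) * f x := by
          rw [← Finset.sum_mul]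
          gcongr
          exact sum_range_floor_inv_succ_le x
  · simp [Nat.floor_eq_zero.2 (by linarith : x < 1)]

lemma tsum_mul_setLIntegral_eq_lintegral_tsum {ι α : Type*} [Countable ι] [MeasurableSpace α]
    {μ : Measure α} (c : ι → ℝ≥0∞) {s : ι → Set α} (hs : ∀ i, MeasurableSet (s i))
    {f : α → ℝ≥0∞} (hf : Measurable f) :
    ∑' i, c i * ∫⁻ x in s i, f x ∂μ = ∫⁻ x, ∑' i, c i * (s i).indicator f x ∂μ := by
  rw [lintegral_tsum fun i => ((hf.indicator (hs i)).const_mul (c i)).aemeasurable]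
  congr 1 with i
  rw [lintegral_const_mul _ (hf.indicator (hs i)), lintegral_indicator (hs i)]

lemma tsum_inv_mul_setLIntegral_Ioi_le {f : ℝ → ℝ≥0∞} (hf : Measurable f) :
    ∑' j : ℕ+, ((j : ℕ) : ℝ≥0∞)⁻¹ * ∫⁻ x in Ioi ((j : ℕ) : ℝ), f x
      ≤ 2 * ∫⁻ x in Ioi 0, ENNReal.ofReal (max 1 (Real.log x)) * f x := by
  rw [tsum_mul_setLIntegral_eq_lintegral_tsum _ (fun _ => measurableSet_Ioi) hf,
    ← lintegral_const_mul' _ _ ofNat_ne_top, ← lintegral_indicator measurableSet_Ioi]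
  refine lintegral_mono fun x => (tsum_inv_mul_indicator_Ioi_le f x).trans_eq ?_
  simp only [indicator, mul_assoc]

lemma tsum_inv_mul_tail_integral_le {Ω : Type*} [MeasurableSpace Ω] (P : Measure Ω)
    {d : ℕ} (hd : 1 ≤ d) {X : Ω → ℝ} (hX : AEMeasurable X P) :
    ∑' j : ℕ+, ((j : ℕ) : ℝ≥0∞)⁻¹ *
        ∫⁻ x in Ioi ((j : ℕ) : ℝ),
          ENNReal.ofReal ((max 1 (Real.log x)) ^ (d - 1)) * P {ω | x < |X ω|}
      ≤ 2 * ∫⁻ ω, ENNReal.ofReal (|X ω| * (max 1 (Real.log |X ω|)) ^ d) ∂P := by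
  have htail : Antitone fun x : ℝ => P {ω | x < |X ω|} :=
    fun _ _ hxy => measure_mono fun _ h => lt_of_le_of_lt hxy h
  have hmeas : Measurable fun x : ℝ =>
      ENNReal.ofReal ((max 1 (Real.log x)) ^ (d - 1)) * P {ω | x < |X ω|} :=
    ((measurable_const.max Real.measurable_log).pow_const _).ennreal_ofReal.mul htail.measurable
  calc _ ≤ 2 * ∫⁻ x in Ioi 0, ENNReal.ofReal (max 1 (Real.log x)) *
          (ENNReal.ofReal ((max 1 (Real.log x)) ^ (d - 1)) * P {ω | x < |X ω|}) :=
        tsum_inv_mul_setLIntegral_Ioi_le hmeas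
    _ = 2 * ∫⁻ x in Ioi 0, P {ω | x < |X ω|} * ENNReal.ofReal ((max 1 (Real.log x)) ^ d) := by
        congr 1
        refine lintegral_congr fun x => ?_
        rw [← mul_assoc, ← ENNReal.ofReal_mul (by positivity), ← pow_succ',
          Nat.sub_add_cancel hd, mul_comm]
    _ ≤ 2 * ∫⁻ ω, ENNReal.ofReal (|X ω| * (max 1 (Real.log |X ω|)) ^ d) ∂P := by
        gcongr
        exact lintegral_meas_lt_mul_le_of_monotoneOn P (fun ω => abs_nonneg (X ω)) hX.abs
          (fun a ha b hb hab => pow_le_pow_left₀ (by positivity)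
            (monotoneOn_max_one_log ha hb hab) d) (by positivity)

theorem stmt11_general {Ω : Type*} [MeasurableSpace Ω] (P : Measure Ω)
    (d : ℕ) (hd : 1 ≤ d)
    (X : Ω → ℝ) (hX : Measurable X)
    (hmom : ∫⁻ ω, ENNReal.ofReal (|X ω| * (max 1 (Real.log |X ω|)) ^ d) ∂P < ∞) :
    (∑' j : ℕ+, ((j : ℕ) : ℝ≥0∞)⁻¹ *
        ∫⁻ x in Set.Ioi (((j : ℕ) : ℝ)),
          ENNReal.ofReal ((max 1 (Real.log x)) ^ (d - 1)) * P {ω : Ω | x < |X ω|}) < ∞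
    ∧ ∃ c : ℝ≥0∞, c < ∞ ∧
      (∑' j : ℕ+, ((j : ℕ) : ℝ≥0∞)⁻¹ *
          ∫⁻ x in Set.Ioi (((j : ℕ) : ℝ)),
            ENNReal.ofReal ((max 1 (Real.log x)) ^ (d - 1)) * P {ω : Ω | x < |X ω|})
        ≤ c * ∫⁻ ω, ENNReal.ofReal (|X ω| * (max 1 (Real.log |X ω|)) ^ d) ∂P := by
  have hbound := tsum_inv_mul_tail_integral_le P hd hX.aemeasurable
  exact ⟨hbound.trans_lt (mul_lt_top ofNat_lt_top hmom), 2, ofNat_lt_top, hbound⟩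

theorem stmt11 {Ω : Type*} [MeasurableSpace Ω] (P : Measure Ω) [IsProbabilityMeasure P]
    (d : ℕ) (hd : 1 ≤ d)
    (X : Ω → ℝ) (hX : Measurable X)
    (hmom : ∫⁻ ω, ENNReal.ofReal (|X ω| * (max 1 (Real.log |X ω|)) ^ d) ∂P < ∞) :
    (∑' j : ℕ+, ((j : ℕ) : ℝ≥0∞)⁻¹ *
        ∫⁻ x in Set.Ioi (((j : ℕ) : ℝ)),
          ENNReal.ofReal ((max 1 (Real.log x)) ^ (d - 1)) * P {ω : Ω | x < |X ω|}) < ∞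
    ∧ ∃ c : ℝ≥0∞, c < ∞ ∧
      (∑' j : ℕ+, ((j : ℕ) : ℝ≥0∞)⁻¹ *
          ∫⁻ x in Set.Ioi (((j : ℕ) : ℝ)),
            ENNReal.ofReal ((max 1 (Real.log x)) ^ (d - 1)) * P {ω : Ω | x < |X ω|})
        ≤ c * ∫⁻ ω, ENNReal.ofReal (|X ω| * (max 1 (Real.log |X ω|)) ^ d) ∂P :=
  stmt11_general P d hd X hX hmom
end

section
/- Let {X_n : n ∈ (ℤ₊)^d} satisfy condition (MD): (1/|n|) ∑_{k ⪯ n} P(|X_k| > x) ≤ M P(|X| > x) for all x ≥ 0 and n. Let 1 < p < 2, 1 ≤ r ≤ p. If E|X|^p < ∞, then ∑_{n=1}^∞ n^{d((p-1)/r - 1) - 1} ∑_{k ⪯ N} E[|X_k|·1{|X_k| > n^{d/r}}] < ∞, where N = (n,…,n) so |N| = n^d. -/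
open MeasureTheory ENNReal

section aux
open Set


lemma key_int {β : ℝ} (hβ : 0 < β) {z : ℝ} (hz : 0 ≤ z) :
    ∫⁻ u in Set.Ioc 0 z, ENNReal.ofReal (u ^ (β - 1)) = ENNReal.ofReal (z ^ β / β) := by
  have hInt : IntegrableOn (fun u : ℝ => u ^ (β - 1)) (Set.Ioc 0 z) := by
    exact (intervalIntegrable_iff_integrableOn_Ioc_of_le hz).1
      (intervalIntegral.intervalIntegrable_rpow' (by linarith))
  rw [← ofReal_integral_eq_lintegral_ofReal hInt ?hnn]
  · congr 1
    rw [← intervalIntegral.integral_of_le hz, integral_rpow (Or.inl (by linarith)),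
      Real.zero_rpow (by linarith : β - 1 + 1 ≠ 0)]
    ring_nf
  case hnn =>
    filter_upwards [ae_restrict_mem measurableSet_Ioc] with u hu
    exact Real.rpow_nonneg hu.1.le _

lemma key_sum {β : ℝ} (hβ : 0 < β) {z : ℝ} (hz : 0 ≤ z) :
    ∑' n : ℕ+, (if (n : ℝ) < z then ENNReal.ofReal ((n : ℝ) ^ (β - 1)) else 0) ≤
      ENNReal.ofReal (2 / min 1 (2 ^ (1 - β)) / β * z ^ β) := by
  set c : ℝ := min 1 (2 ^ (1 - β)) with hc
  have hc0 : 0 < c := lt_min one_pos (Real.rpow_pos_of_pos two_pos _)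
  set B : ℕ+ → Set ℝ := fun n => Set.Ioc ((n : ℝ) - 1/2) n ∩ Set.Ioc 0 z with hB
  have hBmeas : ∀ n : ℕ+, MeasurableSet (B n) := fun n =>
    (measurableSet_Ioc).inter measurableSet_Ioc
  have hterm : ∀ n : ℕ+, (if (n : ℝ) < z then ENNReal.ofReal ((n : ℝ) ^ (β - 1)) else 0) ≤
      ENNReal.ofReal (2 / c) * ∫⁻ u in B n, ENNReal.ofReal (u ^ (β - 1)) := by
    intro n
    by_cases hn : (n : ℝ) < z
    · rw [if_pos hn]
      have hn1 : (1 : ℝ) ≤ (n : ℝ) := by exact_mod_cast n.one_le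
      have hsub : Set.Ioc ((n : ℝ) - 1/2) (n : ℝ) ⊆ Set.Ioc 0 z := fun u hu =>
        ⟨by linarith [hu.1], le_trans hu.2 hn.le⟩
      have hBn : B n = Set.Ioc ((n : ℝ) - 1/2) (n : ℝ) := by
        rw [hB]; exact Set.inter_eq_left.2 hsub
      have hptwise : ∀ u ∈ Set.Ioc ((n : ℝ) - 1/2) (n : ℝ),
          ENNReal.ofReal (c * (n : ℝ) ^ (β - 1)) ≤ ENNReal.ofReal (u ^ (β - 1)) := by
        intro u hu
        apply ENNReal.ofReal_le_ofReal
        have hu0 : (0 : ℝ) < u := by linarith [hu.1]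
        rcases le_total β 1 with h1 | h1
        · calc c * (n : ℝ) ^ (β - 1) ≤ 1 * (n : ℝ) ^ (β - 1) := by
                have := min_le_left (1:ℝ) (2 ^ (1 - β))
                exact mul_le_mul_of_nonneg_right this (Real.rpow_nonneg (by linarith) _)
            _ = (n : ℝ) ^ (β - 1) := one_mul _
            _ ≤ u ^ (β - 1) := Real.rpow_le_rpow_of_nonpos hu0 hu.2 (by linarith)
        · have h2 : ((n : ℝ) / 2) ^ (β - 1) ≤ u ^ (β - 1) := by
            apply Real.rpow_le_rpow (by linarith) (by linarith [hu.1]) (by linarith)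
          calc c * (n : ℝ) ^ (β - 1) ≤ 2 ^ (1 - β) * (n : ℝ) ^ (β - 1) := by
                have := min_le_right (1:ℝ) (2 ^ (1 - β))
                exact mul_le_mul_of_nonneg_right this (Real.rpow_nonneg (by linarith) _)
            _ = ((n : ℝ) / 2) ^ (β - 1) := by
                rw [Real.div_rpow (by linarith) (by norm_num),
                  show (1:ℝ) - β = -(β - 1) by ring,
                  Real.rpow_neg (by norm_num : (0:ℝ) ≤ 2)]
                ring
            _ ≤ u ^ (β - 1) := h2
      have hint_ge : ENNReal.ofReal (c * (n : ℝ) ^ (β - 1)) * ENNReal.ofReal (1/2)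
          ≤ ∫⁻ u in B n, ENNReal.ofReal (u ^ (β - 1)) := by
        rw [hBn]
        calc ENNReal.ofReal (c * (n : ℝ) ^ (β - 1)) * ENNReal.ofReal (1/2)
            = ∫⁻ _ in Set.Ioc ((n : ℝ) - 1/2) (n : ℝ),
                ENNReal.ofReal (c * (n : ℝ) ^ (β - 1)) := by
              rw [setLIntegral_const, Real.volume_Ioc]
              norm_num
          _ ≤ _ := setLIntegral_mono
              (by fun_prop : Measurable fun u : ℝ => ENNReal.ofReal (u ^ (β - 1))) hptwise
      calc ENNReal.ofReal ((n : ℝ) ^ (β - 1))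
          = ENNReal.ofReal (2 / c) * (ENNReal.ofReal (c * (n : ℝ) ^ (β - 1)) * ENNReal.ofReal (1/2)) := by
            rw [← ENNReal.ofReal_mul (by positivity), ← ENNReal.ofReal_mul (by positivity)]
            congr 1
            field_simp
        _ ≤ _ := mul_le_mul_right hint_ge _
    · rw [if_neg hn]; exact zero_le
  calc ∑' n : ℕ+, (if (n : ℝ) < z then ENNReal.ofReal ((n : ℝ) ^ (β - 1)) else 0)
      ≤ ∑' n : ℕ+, ENNReal.ofReal (2 / c) * ∫⁻ u in B n, ENNReal.ofReal (u ^ (β - 1)) :=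
        ENNReal.tsum_le_tsum hterm
    _ = ENNReal.ofReal (2 / c) * ∑' n : ℕ+, ∫⁻ u in B n, ENNReal.ofReal (u ^ (β - 1)) :=
        ENNReal.tsum_mul_left
    _ = ENNReal.ofReal (2 / c) * ∫⁻ u in ⋃ n : ℕ+, B n, ENNReal.ofReal (u ^ (β - 1)) := by
        rw [lintegral_iUnion hBmeas ?_]
        intro m n hmn
        have : Disjoint (Set.Ioc ((m : ℝ) - 1/2) (m : ℝ)) (Set.Ioc ((n : ℝ) - 1/2) (n : ℝ)) := by
          rw [Set.Ioc_disjoint_Ioc]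
          rcases lt_or_gt_of_ne hmn with h | h
          · have h' : ((m : ℕ) : ℝ) + 1 ≤ ((n : ℕ) : ℝ) := by
              exact_mod_cast Nat.succ_le_of_lt ((PNat.coe_lt_coe _ _).2 h)
            refine le_trans (min_le_left _ _) (le_trans ?_ (le_max_right _ _))
            linarith
          · have h' : ((n : ℕ) : ℝ) + 1 ≤ ((m : ℕ) : ℝ) := by
              exact_mod_cast Nat.succ_le_of_lt ((PNat.coe_lt_coe _ _).2 h)
            refine le_trans (min_le_right _ _) (le_trans ?_ (le_max_left _ _))
            linarith
        exact this.mono (Set.inter_subset_left) (Set.inter_subset_left)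
    _ ≤ ENNReal.ofReal (2 / c) * ∫⁻ u in Set.Ioc 0 z, ENNReal.ofReal (u ^ (β - 1)) := by
        apply mul_le_mul_right
        apply lintegral_mono_set
        exact Set.iUnion_subset fun n => Set.inter_subset_right
    _ = ENNReal.ofReal (2 / c) * ENNReal.ofReal (z ^ β / β) := by rw [key_int hβ hz]
    _ = ENNReal.ofReal (2 / c / β * z ^ β) := by
        rw [← ENNReal.ofReal_mul (by positivity)]
        congr 1
        field_simp

lemma rpow_iff {α : ℝ} (hα : 0 < α) {y : ℝ} (hy : 0 ≤ y) (n : ℕ+) :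
    (((n : ℕ) : ℝ) ^ α < y) ↔ (((n : ℕ) : ℝ) < y ^ (1/α)) := by
  have hn0 : (0:ℝ) ≤ ((n : ℕ) : ℝ) := Nat.cast_nonneg _
  constructor
  · intro h
    have h2 := Real.rpow_lt_rpow (Real.rpow_nonneg hn0 _) h (by positivity : (0:ℝ) < 1/α)
    rwa [← Real.rpow_mul hn0, mul_one_div, div_self hα.ne', Real.rpow_one] at h2
  · intro h
    have h2 := Real.rpow_lt_rpow hn0 h hα
    rwa [← Real.rpow_mul hy, one_div, inv_mul_cancel₀ hα.ne', Real.rpow_one] at h2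

lemma claimA {Ω : Type*} [MeasurableSpace Ω] (P : Measure Ω) [IsProbabilityMeasure P]
    (Y : Ω → ℝ) (hY : Measurable Y) {α p : ℝ} (hα : 0 < α) (hp : 0 < p)
    (hmom : ∫⁻ ω, ENNReal.ofReal (|Y ω| ^ p) ∂P < ∞) :
    ∑' n : ℕ+, ENNReal.ofReal (((n : ℕ) : ℝ) ^ (α * p - 1)) *
      P {ω | ((n : ℕ) : ℝ) ^ α < |Y ω|} < ∞ := by
  have hs : 0 < α * p := mul_pos hα hp
  set C : ℝ := 2 / min 1 (2 ^ (1 - α * p)) / (α * p) with hC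
  have hC0 : 0 ≤ C := by
    have : (0:ℝ) < min 1 (2 ^ (1 - α * p)) := lt_min one_pos (Real.rpow_pos_of_pos two_pos _)
    positivity
  have hmeasn : ∀ n : ℕ+, MeasurableSet {ω | ((n : ℕ) : ℝ) ^ α < |Y ω|} :=
    fun n => measurableSet_lt measurable_const hY.abs
  have h1 : ∑' n : ℕ+, ENNReal.ofReal (((n : ℕ) : ℝ) ^ (α * p - 1)) *
        P {ω | ((n : ℕ) : ℝ) ^ α < |Y ω|}
      = ∫⁻ ω, ∑' n : ℕ+, Set.indicator {ω' | ((n : ℕ) : ℝ) ^ α < |Y ω'|}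
          (fun _ => ENNReal.ofReal (((n : ℕ) : ℝ) ^ (α * p - 1))) ω ∂P := by
    rw [lintegral_tsum fun n => (measurable_const.indicator (hmeasn n)).aemeasurable]
    exact tsum_congr fun n => (lintegral_indicator_const (hmeasn n) _).symm
  rw [h1]
  have h2 : ∀ ω, (∑' n : ℕ+, Set.indicator {ω' | ((n : ℕ) : ℝ) ^ α < |Y ω'|}
        (fun _ => ENNReal.ofReal (((n : ℕ) : ℝ) ^ (α * p - 1))) ω)
      ≤ ENNReal.ofReal C * ENNReal.ofReal (|Y ω| ^ p) := by
    intro ω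
    have hz0 : (0:ℝ) ≤ |Y ω| ^ (1/α) := Real.rpow_nonneg (abs_nonneg _) _
    calc (∑' n : ℕ+, Set.indicator {ω' | ((n : ℕ) : ℝ) ^ α < |Y ω'|}
          (fun _ => ENNReal.ofReal (((n : ℕ) : ℝ) ^ (α * p - 1))) ω)
        = ∑' n : ℕ+, (if ((n : ℕ) : ℝ) < |Y ω| ^ (1/α) then
            ENNReal.ofReal (((n : ℕ) : ℝ) ^ (α * p - 1)) else 0) := by
          refine tsum_congr fun n => ?_
          rw [Set.indicator_apply]
          simp only [Set.mem_setOf_eq, rpow_iff hα (abs_nonneg _) n]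
      _ ≤ ENNReal.ofReal (C * (|Y ω| ^ (1/α)) ^ (α * p)) := by
          simpa [hC] using key_sum hs hz0
      _ = ENNReal.ofReal C * ENNReal.ofReal (|Y ω| ^ p) := by
          have he : (|Y ω| ^ (1/α)) ^ (α * p) = |Y ω| ^ p := by
            rw [← Real.rpow_mul (abs_nonneg _)]
            congr 1
            field_simp
          rw [he, ENNReal.ofReal_mul hC0]
  calc ∫⁻ ω, _ ∂P ≤ ∫⁻ ω, ENNReal.ofReal C * ENNReal.ofReal (|Y ω| ^ p) ∂P := lintegral_mono h2
    _ = ENNReal.ofReal C * ∫⁻ ω, ENNReal.ofReal (|Y ω| ^ p) ∂P :=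
        lintegral_const_mul' _ _ ofReal_ne_top
    _ < ∞ := ENNReal.mul_lt_top ofReal_lt_top hmom

lemma claimB {Ω : Type*} [MeasurableSpace Ω] (P : Measure Ω) [IsProbabilityMeasure P]
    (Y : Ω → ℝ) (hY : Measurable Y) {α p : ℝ} (hα : 0 < α) (hp1 : 1 < p)
    (hmom : ∫⁻ ω, ENNReal.ofReal (|Y ω| ^ p) ∂P < ∞) :
    ∑' n : ℕ+, ENNReal.ofReal (((n : ℕ) : ℝ) ^ (α * (p - 1) - 1)) *
      ∫⁻ t in Set.Ioi (((n : ℕ) : ℝ) ^ α), P {ω | t < |Y ω|} < ∞ := by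
  have hp0 : 0 < p := by linarith
  have hβ : 0 < α * (p - 1) := mul_pos hα (by linarith)
  have hGanti : Antitone (fun t : ℝ => P {ω | t < |Y ω|}) := fun a b hab =>
    measure_mono fun ω h => lt_of_le_of_lt hab h
  have hGmeas : Measurable (fun t : ℝ => P {ω | t < |Y ω|}) := hGanti.measurable
  set C : ℝ := 2 / min 1 (2 ^ (1 - α * (p - 1))) / (α * (p - 1)) with hC
  have hC0 : 0 ≤ C := by
    have : (0:ℝ) < min 1 (2 ^ (1 - α * (p-1))) := lt_min one_pos (Real.rpow_pos_of_pos two_pos _)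
    positivity
  have h1 : ∀ n : ℕ+, ENNReal.ofReal (((n : ℕ) : ℝ) ^ (α * (p - 1) - 1)) *
        ∫⁻ t in Set.Ioi (((n : ℕ) : ℝ) ^ α), P {ω | t < |Y ω|}
      = ∫⁻ t in Set.Ioi (0:ℝ), ENNReal.ofReal (((n : ℕ) : ℝ) ^ (α * (p - 1) - 1)) *
          Set.indicator (Set.Ioi (((n : ℕ) : ℝ) ^ α)) (fun t => P {ω | t < |Y ω|}) t := by
    intro n
    rw [lintegral_const_mul' _ _ ofReal_ne_top, lintegral_indicator measurableSet_Ioi,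
      Measure.restrict_restrict measurableSet_Ioi,
      Set.inter_eq_left.2 (Set.Ioi_subset_Ioi (Real.rpow_nonneg (Nat.cast_nonneg _) _))]
  have h2 : ∑' n : ℕ+, ENNReal.ofReal (((n : ℕ) : ℝ) ^ (α * (p - 1) - 1)) *
        ∫⁻ t in Set.Ioi (((n : ℕ) : ℝ) ^ α), P {ω | t < |Y ω|}
      = ∫⁻ t in Set.Ioi (0:ℝ), ∑' n : ℕ+, ENNReal.ofReal (((n : ℕ) : ℝ) ^ (α * (p - 1) - 1)) *
          Set.indicator (Set.Ioi (((n : ℕ) : ℝ) ^ α)) (fun t => P {ω | t < |Y ω|}) t := by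
    rw [lintegral_tsum fun n => ?_]
    · exact tsum_congr h1
    · exact (measurable_const.mul (hGmeas.indicator measurableSet_Ioi)).aemeasurable
  rw [h2]
  have h3 : ∀ t ∈ Set.Ioi (0:ℝ), (∑' n : ℕ+, ENNReal.ofReal (((n : ℕ) : ℝ) ^ (α * (p - 1) - 1)) *
        Set.indicator (Set.Ioi (((n : ℕ) : ℝ) ^ α)) (fun t => P {ω | t < |Y ω|}) t)
      ≤ ENNReal.ofReal C * (P {ω | t < |Y ω|} * ENNReal.ofReal (t ^ (p - 1))) := by
    intro t ht
    have ht0 : (0:ℝ) < t := ht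
    have hz0 : (0:ℝ) ≤ t ^ (1/α) := Real.rpow_nonneg ht0.le _
    calc (∑' n : ℕ+, ENNReal.ofReal (((n : ℕ) : ℝ) ^ (α * (p - 1) - 1)) *
          Set.indicator (Set.Ioi (((n : ℕ) : ℝ) ^ α)) (fun t => P {ω | t < |Y ω|}) t)
        = (∑' n : ℕ+, (if ((n : ℕ) : ℝ) < t ^ (1/α) then
            ENNReal.ofReal (((n : ℕ) : ℝ) ^ (α * (p - 1) - 1)) else 0)) * P {ω | t < |Y ω|} := by
          rw [← ENNReal.tsum_mul_right]
          refine tsum_congr fun n => ?_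
          rw [Set.indicator_apply]
          simp only [Set.mem_Ioi, rpow_iff hα ht0.le n]
          by_cases h : ((n : ℕ) : ℝ) < t ^ (1/α) <;> simp [h]
      _ ≤ ENNReal.ofReal (C * (t ^ (1/α)) ^ (α * (p - 1))) * P {ω | t < |Y ω|} :=
          mul_le_mul_left (by simpa [hC] using key_sum hβ hz0) _
      _ = ENNReal.ofReal C * (P {ω | t < |Y ω|} * ENNReal.ofReal (t ^ (p - 1))) := by
          have he : (t ^ (1/α)) ^ (α * (p - 1)) = t ^ (p - 1) := by
            rw [← Real.rpow_mul ht0.le]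
            congr 1
            field_simp
          rw [he, ENNReal.ofReal_mul hC0]
          ring
  calc ∫⁻ t in Set.Ioi (0:ℝ), ∑' n : ℕ+, ENNReal.ofReal (((n : ℕ) : ℝ) ^ (α * (p - 1) - 1)) *
          Set.indicator (Set.Ioi (((n : ℕ) : ℝ) ^ α)) (fun t => P {ω | t < |Y ω|}) t
      ≤ ∫⁻ t in Set.Ioi (0:ℝ), ENNReal.ofReal C * (P {ω | t < |Y ω|} * ENNReal.ofReal (t ^ (p - 1))) :=
        setLIntegral_mono (measurable_const.mul (hGmeas.mul (by fun_prop))) h3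
    _ = ENNReal.ofReal C * ∫⁻ t in Set.Ioi (0:ℝ), P {ω | t < |Y ω|} * ENNReal.ofReal (t ^ (p - 1)) :=
        lintegral_const_mul' _ _ ofReal_ne_top
    _ < ∞ := by
        have hlc := lintegral_rpow_eq_lintegral_meas_lt_mul P
          (ae_of_all _ fun ω => abs_nonneg (Y ω)) hY.abs.aemeasurable hp0
        have hI : ∫⁻ t in Set.Ioi (0:ℝ), P {ω | t < |Y ω|} * ENNReal.ofReal (t ^ (p - 1)) < ∞ := by
          by_contra hcon
          rw [not_lt, top_le_iff] at hcon
          rw [hlc, hcon, ENNReal.mul_top (ENNReal.ofReal_pos.2 hp0).ne'] at hmom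
          exact absurd hmom (lt_irrefl _)
        exact ENNReal.mul_lt_top ofReal_lt_top hI

end aux

theorem stmt12 {Ω : Type*} [MeasurableSpace Ω] (P : Measure Ω) [IsProbabilityMeasure P]
    {d : ℕ} (hd : 1 ≤ d)
    (X : (Fin d → ℕ+) → Ω → ℝ) (Y : Ω → ℝ)
    (hX : ∀ k, Measurable (X k)) (hY : Measurable Y)
    (M : ℝ) (hM : 0 ≤ M)
    (hMD : ∀ x : ℝ, 0 ≤ x → ∀ n : Fin d → ℕ+,
      ∑ k ∈ Finset.Icc 1 n, P {ω : Ω | x < |X k ω|}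
        ≤ (pidx n : ℝ≥0∞) * ENNReal.ofReal M * P {ω : Ω | x < |Y ω|})
    (p r : ℝ) (hp1 : 1 < p) (hp2 : p < 2) (hr1 : 1 ≤ r) (hrp : r ≤ p)
    (hmom : ∫⁻ ω, ENNReal.ofReal (|Y ω| ^ p) ∂P < ∞) :
    ∑' n : ℕ+,
      ENNReal.ofReal (((n : ℕ) : ℝ) ^ ((d : ℝ) * ((p - 1) / r - 1) - 1)) *
        ∑ k ∈ Finset.Icc 1 (fun _ : Fin d => n),
          ∫⁻ ω in {ω : Ω | ((n : ℕ) : ℝ) ^ ((d : ℝ) / r) < |X k ω|},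
            ENNReal.ofReal |X k ω| ∂P < ∞ := by
  have hr0 : (0:ℝ) < r := lt_of_lt_of_le one_pos hr1
  have hd0 : (0:ℝ) < (d:ℝ) := by exact_mod_cast hd
  set α : ℝ := (d : ℝ) / r with hα_def
  have hα : 0 < α := div_pos hd0 hr0
  have hp0 : 0 < p := by linarith
  -- per-n bound
  have hbound : ∀ n : ℕ+,
      (∑ k ∈ Finset.Icc 1 (fun _ : Fin d => n),
        ∫⁻ ω in {ω : Ω | ((n : ℕ) : ℝ) ^ α < |X k ω|}, ENNReal.ofReal |X k ω| ∂P)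
      ≤ (((n:ℕ)^d : ℕ) : ℝ≥0∞) * ENNReal.ofReal M *
          (ENNReal.ofReal (((n : ℕ) : ℝ) ^ α) * P {ω | ((n : ℕ) : ℝ) ^ α < |Y ω|} +
            ∫⁻ t in Set.Ioi (((n : ℕ) : ℝ) ^ α), P {ω | t < |Y ω|}) := by
    intro n
    have hn0 : (0:ℝ) < ((n:ℕ):ℝ) := by exact_mod_cast n.pos
    set a : ℝ := ((n : ℕ) : ℝ) ^ α with ha_def
    have ha0 : 0 < a := Real.rpow_pos_of_pos hn0 _
    have hk : ∀ k, ∫⁻ ω in {ω : Ω | a < |X k ω|}, ENNReal.ofReal |X k ω| ∂P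
        = ∫⁻ t in Set.Ioi (0:ℝ), P {ω | max t a < |X k ω|} := by
      intro k
      rw [lintegral_eq_lintegral_meas_lt (P.restrict _)
        (ae_of_all _ fun ω => abs_nonneg _) (hX k).abs.aemeasurable]
      refine setLIntegral_congr_fun measurableSet_Ioi (fun t ht => ?_)
      rw [Measure.restrict_apply (measurableSet_lt measurable_const (hX k).abs)]
      congr 1
      ext ω
      simp only [Set.mem_inter_iff, Set.mem_setOf_eq, max_lt_iff]
    have hmeas_t : ∀ k : Fin d → ℕ+, Measurable fun t : ℝ => P {ω | max t a < |X k ω|} := by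
      intro k
      have : Antitone fun t : ℝ => P {ω | max t a < |X k ω|} := fun s t hst =>
        measure_mono fun ω h => lt_of_le_of_lt (max_le_max hst le_rfl) h
      exact this.measurable
    have hpidx : (pidx (fun _ : Fin d => n) : ℝ≥0∞) = (((n:ℕ)^d : ℕ) : ℝ≥0∞) := by
      simp [pidx, Finset.prod_const]
    calc (∑ k ∈ Finset.Icc 1 (fun _ : Fin d => n),
          ∫⁻ ω in {ω : Ω | a < |X k ω|}, ENNReal.ofReal |X k ω| ∂P)
        = ∑ k ∈ Finset.Icc 1 (fun _ : Fin d => n),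
            ∫⁻ t in Set.Ioi (0:ℝ), P {ω | max t a < |X k ω|} :=
          Finset.sum_congr rfl fun k _ => hk k
      _ = ∫⁻ t in Set.Ioi (0:ℝ), ∑ k ∈ Finset.Icc 1 (fun _ : Fin d => n),
            P {ω | max t a < |X k ω|} :=
          (lintegral_finset_sum' _ fun k _ => (hmeas_t k).aemeasurable).symm
      _ ≤ ∫⁻ t in Set.Ioi (0:ℝ), (pidx (fun _ : Fin d => n) : ℝ≥0∞) * ENNReal.ofReal M *
            P {ω | max t a < |Y ω|} :=
          lintegral_mono fun t => hMD (max t a) (le_max_of_le_right ha0.le) _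
      _ = (pidx (fun _ : Fin d => n) : ℝ≥0∞) * ENNReal.ofReal M *
            ∫⁻ t in Set.Ioi (0:ℝ), P {ω | max t a < |Y ω|} :=
          lintegral_const_mul' _ _ (ENNReal.mul_ne_top (ENNReal.natCast_ne_top _) ofReal_ne_top)
      _ = (((n:ℕ)^d : ℕ) : ℝ≥0∞) * ENNReal.ofReal M *
            (ENNReal.ofReal a * P {ω | a < |Y ω|} + ∫⁻ t in Set.Ioi a, P {ω | t < |Y ω|}) := by
          rw [hpidx]
          congr 1
          rw [← Set.Ioc_union_Ioi_eq_Ioi ha0.le,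
            lintegral_union measurableSet_Ioi (Set.Ioc_disjoint_Ioi le_rfl)]
          congr 1
          · rw [setLIntegral_congr_fun measurableSet_Ioc
              (fun t (ht : t ∈ Set.Ioc (0:ℝ) a) => by rw [max_eq_right ht.2]),
              setLIntegral_const, Real.volume_Ioc, sub_zero, mul_comm]
          · exact setLIntegral_congr_fun measurableSet_Ioi
              (fun t (ht : t ∈ Set.Ioi a) => by rw [max_eq_left (le_of_lt ht)])
  -- constants
  have e1 : ∀ n : ℕ+, ENNReal.ofReal (((n : ℕ) : ℝ) ^ ((d : ℝ) * ((p - 1) / r - 1) - 1)) *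
      (((n:ℕ)^d : ℕ) : ℝ≥0∞) = ENNReal.ofReal (((n : ℕ) : ℝ) ^ (α * (p - 1) - 1)) := by
    intro n
    have hn0 : (0:ℝ) < ((n:ℕ):ℝ) := by exact_mod_cast n.pos
    rw [show (((n:ℕ)^d : ℕ) : ℝ≥0∞) = ENNReal.ofReal (((n:ℕ):ℝ) ^ (d:ℝ)) by
      rw [← ENNReal.ofReal_natCast]
      congr 1
      push_cast
      rw [Real.rpow_natCast]]
    rw [← ENNReal.ofReal_mul (Real.rpow_nonneg hn0.le _), ← Real.rpow_add hn0]
    congr 1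
    rw [hα_def]
    field_simp
    ring
  have e2 : ∀ n : ℕ+, ENNReal.ofReal (((n : ℕ) : ℝ) ^ (α * (p - 1) - 1)) *
      ENNReal.ofReal (((n : ℕ) : ℝ) ^ α) = ENNReal.ofReal (((n : ℕ) : ℝ) ^ (α * p - 1)) := by
    intro n
    have hn0 : (0:ℝ) < ((n:ℕ):ℝ) := by exact_mod_cast n.pos
    rw [← ENNReal.ofReal_mul (Real.rpow_nonneg hn0.le _), ← Real.rpow_add hn0]
    congr 1
    ring
  have hfin := ENNReal.add_lt_top.2 ⟨claimA P Y hY hα hp0 hmom, claimB P Y hY hα hp1 hmom⟩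
  calc ∑' n : ℕ+,
      ENNReal.ofReal (((n : ℕ) : ℝ) ^ ((d : ℝ) * ((p - 1) / r - 1) - 1)) *
        ∑ k ∈ Finset.Icc 1 (fun _ : Fin d => n),
          ∫⁻ ω in {ω : Ω | ((n : ℕ) : ℝ) ^ α < |X k ω|}, ENNReal.ofReal |X k ω| ∂P
      ≤ ∑' n : ℕ+, ENNReal.ofReal (((n : ℕ) : ℝ) ^ ((d : ℝ) * ((p - 1) / r - 1) - 1)) *
          ((((n:ℕ)^d : ℕ) : ℝ≥0∞) * ENNReal.ofReal M *
            (ENNReal.ofReal (((n : ℕ) : ℝ) ^ α) * P {ω | ((n : ℕ) : ℝ) ^ α < |Y ω|} +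
              ∫⁻ t in Set.Ioi (((n : ℕ) : ℝ) ^ α), P {ω | t < |Y ω|})) :=
        ENNReal.tsum_le_tsum fun n => mul_le_mul_right (hbound n) _
    _ = ∑' n : ℕ+, ENNReal.ofReal M *
          (ENNReal.ofReal (((n : ℕ) : ℝ) ^ (α * p - 1)) * P {ω | ((n : ℕ) : ℝ) ^ α < |Y ω|} +
            ENNReal.ofReal (((n : ℕ) : ℝ) ^ (α * (p - 1) - 1)) *
              ∫⁻ t in Set.Ioi (((n : ℕ) : ℝ) ^ α), P {ω | t < |Y ω|}) := by
        refine tsum_congr fun n => ?_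
        rw [show ∀ A B C D E : ℝ≥0∞, A * (B * C * (D + E)) = C * ((A * B * D) + (A * B) * E)
          from fun A B C D E => by ring]
        rw [e1 n, ← mul_assoc (ENNReal.ofReal (((n : ℕ) : ℝ) ^ (α * (p - 1) - 1))), e2 n]
    _ = ENNReal.ofReal M *
          ((∑' n : ℕ+, ENNReal.ofReal (((n : ℕ) : ℝ) ^ (α * p - 1)) *
              P {ω | ((n : ℕ) : ℝ) ^ α < |Y ω|}) +
            ∑' n : ℕ+, ENNReal.ofReal (((n : ℕ) : ℝ) ^ (α * (p - 1) - 1)) *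
              ∫⁻ t in Set.Ioi (((n : ℕ) : ℝ) ^ α), P {ω | t < |Y ω|}) := by
        rw [ENNReal.tsum_mul_left, ENNReal.tsum_add]
    _ < ∞ := ENNReal.mul_lt_top ofReal_lt_top hfin
end

section
/- Let {X_n : n ∈ (ℤ₊)^d} satisfy condition (MD): (1/|n|) ∑_{k ⪯ n} P(|X_k| > x) ≤ M P(|X| > x) for all x ≥ 0 and n. Let 1 ≤ p < 2, 1 ≤ r ≤ p. If E|X|^p < ∞, then ∑_{n=1}^∞ n^{d((p-2)/r - 1) - 1} ∑_{k ⪯ N} E[X_k²·1{|X_k| ≤ n^{d/r}}] < ∞, where N = (n,…,n). -/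
open MeasureTheory ENNReal Set

lemma pidx_const {d : ℕ} (n : ℕ+) : pidx (fun _ : Fin d => n) = (n : ℕ) ^ d := by
  simp [pidx]

lemma sum_Ico_rpow_succ_le {s : ℝ} (hs : s < 0) {m K : ℕ} (hm : 1 ≤ m) (hmK : m ≤ K) :
    ∑ i ∈ Finset.Ico m K, ((i + 1 : ℕ) : ℝ) ^ (s - 1) ≤ (m : ℝ) ^ s / -s := by
  have hm0 : (0 : ℝ) < m := by exact_mod_cast hm
  have hanti : AntitoneOn (fun x : ℝ => x ^ (s - 1)) (Icc (m : ℝ) K) := fun x hx y _ hxy =>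
    Real.rpow_le_rpow_of_nonpos (hm0.trans_le hx.1) hxy (by linarith)
  have hint : ∫ x in (m : ℝ)..K, x ^ (s - 1) = ((K : ℝ) ^ s - (m : ℝ) ^ s) / s := by
    rw [integral_rpow (Or.inr ⟨by linarith, ?_⟩), sub_add_cancel]
    rw [uIcc_of_le (by exact_mod_cast hmK)]
    exact fun h => hm0.not_ge h.1
  have hK : 0 ≤ (K : ℝ) ^ s := by positivity
  calc _ ≤ ∫ x in (m : ℝ)..K, x ^ (s - 1) := hanti.sum_le_integral_Ico hmK
    _ = ((m : ℝ) ^ s - (K : ℝ) ^ s) / -s := by rw [hint]; ring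
    _ ≤ (m : ℝ) ^ s / -s := by gcongr <;> linarith

lemma sum_Icc_rpow_sub_one_le {s : ℝ} (hs : s < 0) {m : ℕ} (hm : 1 ≤ m) (K : ℕ) :
    ∑ n ∈ Finset.Icc m K, (n : ℝ) ^ (s - 1) ≤ (1 - s⁻¹) * (m : ℝ) ^ s := by
  have hm0 : (0 : ℝ) < m := by exact_mod_cast hm
  have hms : 0 < (m : ℝ) ^ s := by positivity
  have hC : 1 - s⁻¹ = 1 + 1 / -s := by rw [one_div, inv_neg, sub_eq_add_neg]
  rcases lt_or_ge K m with hKm | hmK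
  · rw [Finset.Icc_eq_empty (by omega), Finset.sum_empty, hC]
    have : 0 < -s := by linarith
    positivity
  have hhead : (m : ℝ) ^ (s - 1) ≤ (m : ℝ) ^ s :=
    Real.rpow_le_rpow_of_exponent_le (by exact_mod_cast hm) (by linarith)
  calc ∑ n ∈ Finset.Icc m K, (n : ℝ) ^ (s - 1)
      = (m : ℝ) ^ (s - 1) + ∑ i ∈ Finset.Ico m K, ((i + 1 : ℕ) : ℝ) ^ (s - 1) := by
        rw [← Finset.Ico_add_one_right_eq_Icc, Finset.sum_eq_sum_Ico_succ_bot (by omega),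
          ← Finset.sum_Ico_add' (c := 1)]
    _ ≤ (m : ℝ) ^ s + (m : ℝ) ^ s / -s := add_le_add hhead (sum_Ico_rpow_succ_le hs hm hmK)
    _ = (1 - s⁻¹) * (m : ℝ) ^ s := by rw [hC]; ring

lemma tsum_pnat_ite_le {f : ℕ → ℝ≥0∞} {m : ℕ} {c : ℝ≥0∞}
    (h : ∀ K, ∑ n ∈ Finset.Icc m K, f n ≤ c) :
    ∑' n : ℕ+, (if m ≤ (n : ℕ) then f n else 0) ≤ c := by
  refine (ENNReal.tsum_comp_le_tsum_of_injective PNat.coe_injective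
    (fun n => if m ≤ n then f n else 0)).trans (ENNReal.tsum_le_of_sum_range_le fun K => ?_)
  rw [← Finset.sum_filter]
  refine (Finset.sum_le_sum_of_subset fun n hn => ?_).trans (h K)
  simp only [Finset.mem_filter, Finset.mem_range] at hn
  exact Finset.mem_Icc.2 ⟨hn.2, hn.1.le⟩

lemma tsum_ite_lt_rpow_sub_one_le {s q : ℝ} (hs : s < 0) (hq : 0 < q) :
    ∑' n : ℕ+, (if q < (n : ℕ) then ENNReal.ofReal (((n : ℕ) : ℝ) ^ (s - 1)) else 0)
      ≤ ENNReal.ofReal ((1 - s⁻¹) * q ^ s) := by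
  set m := ⌊q⌋₊ + 1
  have hqm : q < m := by push_cast [m]; exact Nat.lt_floor_add_one q
  have hlt : ∀ n : ℕ, q < n ↔ m ≤ n := fun n => (Nat.floor_lt hq.le).symm
  simp_rw [hlt]
  refine tsum_pnat_ite_le (f := fun n : ℕ => ENNReal.ofReal ((n : ℝ) ^ (s - 1))) fun K => ?_
  rw [← ENNReal.ofReal_sum_of_nonneg fun n _ => by positivity]
  refine ENNReal.ofReal_le_ofReal ((sum_Icc_rpow_sub_one_le hs (by omega) K).trans ?_)
  have hC : 0 ≤ 1 - s⁻¹ := by have := inv_lt_zero.2 hs; linarith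
  exact mul_le_mul_of_nonneg_left (Real.rpow_le_rpow_of_nonpos hq hqm.le hs.le) hC

lemma tsum_ite_lt_rpow_mul_le {β s x : ℝ} (hβ : 0 < β) (hs : s < 0) (hx : 0 < x) :
    (∑' n : ℕ+, if x < ((n : ℕ) : ℝ) ^ β then ENNReal.ofReal (((n : ℕ) : ℝ) ^ (s - 1)) else 0)
        * ENNReal.ofReal x
      ≤ ENNReal.ofReal (1 - s⁻¹) * ENNReal.ofReal (x ^ (s / β + 1)) := by
  have hlt : ∀ n : ℕ, x < (n : ℝ) ^ β ↔ x ^ β⁻¹ < n := fun n =>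
    (Real.rpow_inv_lt_iff_of_pos hx.le n.cast_nonneg hβ).symm
  simp_rw [hlt]
  have hC : 0 ≤ 1 - s⁻¹ := by have := inv_lt_zero.2 hs; linarith
  have hpow : (x ^ β⁻¹) ^ s * x = x ^ (s / β + 1) := by
    rw [← Real.rpow_mul hx.le, Real.rpow_add hx, Real.rpow_one, inv_mul_eq_div]
  calc _ ≤ ENNReal.ofReal ((1 - s⁻¹) * (x ^ β⁻¹) ^ s) * ENNReal.ofReal x :=
        mul_le_mul_left (tsum_ite_lt_rpow_sub_one_le hs (by positivity)) _
    _ = ENNReal.ofReal (1 - s⁻¹) * ENNReal.ofReal (x ^ (s / β + 1)) := by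
        rw [← ENNReal.ofReal_mul (by positivity), ← ENNReal.ofReal_mul hC, mul_assoc, hpow]

lemma setLIntegral_Ioo_eq_setLIntegral_Ioi_indicator (g : ℝ → ℝ≥0∞) (a b : ℝ) :
    ∫⁻ x in Ioo a b, g x = ∫⁻ x in Ioi a, (Iio b).indicator g x := by
  rw [lintegral_indicator measurableSet_Iio, Measure.restrict_restrict measurableSet_Iio,
    Iio_inter_Ioi]

lemma tsum_mul_setLIntegral_Ioo {ι : Type*} [Countable ι] (a : ι → ℝ≥0∞) (t : ι → ℝ)
    {g : ℝ → ℝ≥0∞} (hg : Measurable g) :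
    ∑' i, a i * ∫⁻ x in Ioo 0 (t i), g x
      = ∫⁻ x in Ioi 0, (∑' i, if x < t i then a i else 0) * g x := by
  simp_rw [setLIntegral_Ioo_eq_setLIntegral_Ioi_indicator,
    ← lintegral_const_mul _ (hg.indicator measurableSet_Iio)]
  rw [← lintegral_tsum fun i => ((hg.indicator measurableSet_Iio).const_mul _).aemeasurable]
  congr 1 with x
  rw [← ENNReal.tsum_mul_right]
  congr 1 with i
  by_cases hx : x < t i <;> simp [hx]

lemma setLIntegral_tsum_ite_mul_le {β s : ℝ} (hβ : 0 < β) (hs : s < 0) (T : ℝ → ℝ≥0∞) :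
    ∫⁻ x in Ioi 0, (∑' n : ℕ+, if x < ((n : ℕ) : ℝ) ^ β
        then ENNReal.ofReal (((n : ℕ) : ℝ) ^ (s - 1)) else 0) * (T x * ENNReal.ofReal x)
      ≤ ENNReal.ofReal (1 - s⁻¹) * ∫⁻ x in Ioi 0, T x * ENNReal.ofReal (x ^ (s / β + 1)) := by
  rw [← lintegral_const_mul' _ _ ENNReal.ofReal_ne_top]
  refine setLIntegral_mono' measurableSet_Ioi fun x hx => ?_
  calc _ = T x * ((∑' n : ℕ+, if x < ((n : ℕ) : ℝ) ^ β
          then ENNReal.ofReal (((n : ℕ) : ℝ) ^ (s - 1)) else 0) * ENNReal.ofReal x) := by ring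
    _ ≤ T x * (ENNReal.ofReal (1 - s⁻¹) * ENNReal.ofReal (x ^ (s / β + 1))) :=
        mul_le_mul_right (tsum_ite_lt_rpow_mul_le hβ hs hx) _
    _ = _ := by ring

section Tail

variable {Ω : Type*} [MeasurableSpace Ω] (μ : Measure Ω)

lemma measurable_measure_lt (f : Ω → ℝ) : Measurable fun x : ℝ => μ {ω | x < f ω} :=
  Antitone.measurable fun _ _ hab => measure_mono fun _ hω => hab.trans_lt hω

lemma setLIntegral_sq_le_two_mul_lintegral_tail {f : Ω → ℝ} (hf : Measurable f) (t : ℝ) :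
    ∫⁻ ω in {ω | |f ω| ≤ t}, ENNReal.ofReal (f ω ^ 2) ∂μ
      ≤ 2 * ∫⁻ x in Ioo 0 t, μ {ω | x < |f ω|} * ENNReal.ofReal x := by
  set S := {ω | |f ω| ≤ t}
  have hS : MeasurableSet S := measurableSet_le hf.abs measurable_const
  set g : Ω → ℝ := S.indicator fun ω => |f ω|
  have hg_sq : ∀ ω, S.indicator (fun ω => ENNReal.ofReal (f ω ^ 2)) ω
      = ENNReal.ofReal (g ω ^ (2 : ℝ)) := fun ω => by
    by_cases hω : ω ∈ S <;> simp [g, hω]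
  have hg_tail : ∀ x ∈ Ioi (0 : ℝ), μ {ω | x < g ω} * ENNReal.ofReal (x ^ ((2 : ℝ) - 1))
      ≤ (Iio t).indicator (fun x => μ {ω | x < |f ω|} * ENNReal.ofReal x) x := fun x hx => by
    have hsub : {ω | x < g ω} ⊆ {ω | x < |f ω|} ∩ {_ω | x < t} := fun ω (hω : x < g ω) => by
      by_cases hωS : ω ∈ S
      · rw [show g ω = |f ω| from indicator_of_mem hωS _] at hω
        exact ⟨hω, hω.trans_le hωS⟩
      · rw [show g ω = 0 from indicator_of_notMem hωS _] at hω
        exact absurd hx (not_lt.2 hω.le)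
    rw [show x ^ ((2 : ℝ) - 1) = x by norm_num]
    by_cases hxt : x < t
    · rw [indicator_of_mem (show x ∈ Iio t from hxt)]
      exact mul_le_mul_left (measure_mono (hsub.trans inter_subset_left)) _
    · have hempty : {ω | x < g ω} = ∅ := subset_empty_iff.1 fun ω hω => hxt (hsub hω).2
      simp [hempty]
  calc ∫⁻ ω in S, ENNReal.ofReal (f ω ^ 2) ∂μ
      = ENNReal.ofReal 2 *
          ∫⁻ x in Ioi 0, μ {ω | x < g ω} * ENNReal.ofReal (x ^ ((2 : ℝ) - 1)) := by
        rw [← lintegral_indicator hS, lintegral_congr hg_sq]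
        exact lintegral_rpow_eq_lintegral_meas_lt_mul μ
          (ae_of_all _ fun ω => indicator_nonneg (fun _ _ => abs_nonneg _) ω)
          (hf.abs.indicator hS).aemeasurable two_pos
    _ ≤ 2 * ∫⁻ x in Ioi 0,
          (Iio t).indicator (fun x => μ {ω | x < |f ω|} * ENNReal.ofReal x) x := by
        rw [ENNReal.ofReal_ofNat]
        gcongr 2 * ?_
        exact setLIntegral_mono' measurableSet_Ioi hg_tail
    _ = 2 * ∫⁻ x in Ioo 0 t, μ {ω | x < |f ω|} * ENNReal.ofReal x := by
        rw [setLIntegral_Ioo_eq_setLIntegral_Ioi_indicator]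

lemma sum_setLIntegral_sq_le {ι : Type*} (s : Finset ι) {X : ι → Ω → ℝ}
    (hX : ∀ k, Measurable (X k)) (Y : Ω → ℝ) (c : ℝ≥0∞)
    (hXY : ∀ x : ℝ, 0 ≤ x → ∑ k ∈ s, μ {ω | x < |X k ω|} ≤ c * μ {ω | x < |Y ω|}) (t : ℝ) :
    ∑ k ∈ s, ∫⁻ ω in {ω | |X k ω| ≤ t}, ENNReal.ofReal (X k ω ^ 2) ∂μ
      ≤ 2 * c * ∫⁻ x in Ioo 0 t, μ {ω | x < |Y ω|} * ENNReal.ofReal x := by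
  have htail : ∀ Z : Ω → ℝ, Measurable fun x : ℝ => μ {ω | x < |Z ω|} * ENNReal.ofReal x :=
    fun Z => (measurable_measure_lt μ _).mul ENNReal.measurable_ofReal
  calc ∑ k ∈ s, ∫⁻ ω in {ω | |X k ω| ≤ t}, ENNReal.ofReal (X k ω ^ 2) ∂μ
      ≤ ∑ k ∈ s, 2 * ∫⁻ x in Ioo 0 t, μ {ω | x < |X k ω|} * ENNReal.ofReal x :=
        Finset.sum_le_sum fun k _ => setLIntegral_sq_le_two_mul_lintegral_tail μ (hX k) t
    _ = 2 * ∫⁻ x in Ioo 0 t, (∑ k ∈ s, μ {ω | x < |X k ω|}) * ENNReal.ofReal x := by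
        rw [← Finset.mul_sum, ← lintegral_finsetSum' _ fun k _ => (htail (X k)).aemeasurable]
        simp_rw [Finset.sum_mul]
    _ ≤ 2 * ∫⁻ x in Ioo 0 t, c * (μ {ω | x < |Y ω|} * ENNReal.ofReal x) := by
        refine mul_le_mul_right (setLIntegral_mono' measurableSet_Ioo fun x hx => ?_) 2
        rw [← mul_assoc]
        exact mul_le_mul_left (hXY x hx.1.le) _
    _ = 2 * c * ∫⁻ x in Ioo 0 t, μ {ω | x < |Y ω|} * ENNReal.ofReal x := by
        rw [lintegral_const_mul _ (htail Y), mul_assoc]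

lemma lintegral_tail_mul_rpow_lt_top {Y : Ω → ℝ} (hY : Measurable Y) {p : ℝ} (hp : 0 < p)
    (hmom : ∫⁻ ω, ENNReal.ofReal (|Y ω| ^ p) ∂μ < ∞) :
    ∫⁻ x in Ioi 0, μ {ω | x < |Y ω|} * ENNReal.ofReal (x ^ (p - 1)) < ∞ := by
  rw [lintegral_rpow_eq_lintegral_meas_lt_mul μ (ae_of_all _ fun ω => abs_nonneg (Y ω))
    hY.abs.aemeasurable hp] at hmom
  exact ENNReal.lt_top_of_mul_ne_top_right hmom.ne (by simpa using hp)

lemma ofReal_rpow_mul_sum_setLIntegral_sq_le {d : ℕ} {X : (Fin d → ℕ+) → Ω → ℝ}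
    (hX : ∀ k, Measurable (X k)) (Y : Ω → ℝ) (M : ℝ)
    (hMD : ∀ x : ℝ, 0 ≤ x → ∀ n : Fin d → ℕ+,
      ∑ k ∈ Finset.Icc 1 n, μ {ω : Ω | x < |X k ω|}
        ≤ (pidx n : ℝ≥0∞) * ENNReal.ofReal M * μ {ω : Ω | x < |Y ω|})
    (n : ℕ+) (e t : ℝ) :
    ENNReal.ofReal (((n : ℕ) : ℝ) ^ e) * ∑ k ∈ Finset.Icc 1 (fun _ : Fin d => n),
        ∫⁻ ω in {ω | |X k ω| ≤ t}, ENNReal.ofReal (X k ω ^ 2) ∂μ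
      ≤ 2 * ENNReal.ofReal M * (ENNReal.ofReal (((n : ℕ) : ℝ) ^ (e + d)) *
          ∫⁻ x in Ioo 0 t, μ {ω | x < |Y ω|} * ENNReal.ofReal x) := by
  have hn : (0 : ℝ) < (n : ℕ) := by exact_mod_cast n.pos
  have hweight : ENNReal.ofReal (((n : ℕ) : ℝ) ^ e) * (pidx fun _ : Fin d => n : ℝ≥0∞)
      = ENNReal.ofReal (((n : ℕ) : ℝ) ^ (e + d)) := by
    rw [pidx_const, ← ENNReal.ofReal_natCast, ← ENNReal.ofReal_mul (by positivity), Nat.cast_pow,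
      ← Real.rpow_natCast, ← Real.rpow_add hn]
  calc _ ≤ ENNReal.ofReal (((n : ℕ) : ℝ) ^ e) *
        (2 * ((pidx fun _ : Fin d => n : ℝ≥0∞) * ENNReal.ofReal M) *
          ∫⁻ x in Ioo 0 t, μ {ω | x < |Y ω|} * ENNReal.ofReal x) :=
        mul_le_mul_right (sum_setLIntegral_sq_le μ _ hX Y _ (fun x hx => hMD x hx _) t) _
    _ = _ := by rw [← hweight]; ring

end Tail

theorem stmt13_general {Ω : Type*} [MeasurableSpace Ω] (P : Measure Ω)
    {d : ℕ} (hd : 1 ≤ d)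
    (X : (Fin d → ℕ+) → Ω → ℝ) (Y : Ω → ℝ)
    (hX : ∀ k, Measurable (X k)) (hY : Measurable Y)
    (M : ℝ)
    (hMD : ∀ x : ℝ, 0 ≤ x → ∀ n : Fin d → ℕ+,
      ∑ k ∈ Finset.Icc 1 n, P {ω : Ω | x < |X k ω|}
        ≤ (pidx n : ℝ≥0∞) * ENNReal.ofReal M * P {ω : Ω | x < |Y ω|})
    (p r : ℝ) (hp1 : 1 ≤ p) (hp2 : p < 2) (hr1 : 1 ≤ r)
    (hmom : ∫⁻ ω, ENNReal.ofReal (|Y ω| ^ p) ∂P < ∞) :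
    ∑' n : ℕ+,
      ENNReal.ofReal (((n : ℕ) : ℝ) ^ ((d : ℝ) * ((p - 2) / r - 1) - 1)) *
        ∑ k ∈ Finset.Icc 1 (fun _ : Fin d => n),
          ∫⁻ ω in {ω : Ω | |X k ω| ≤ ((n : ℕ) : ℝ) ^ ((d : ℝ) / r)},
            ENNReal.ofReal (X k ω ^ 2) ∂P < ∞ := by
  set β : ℝ := d / r
  have hβ : 0 < β := div_pos (by exact_mod_cast hd) (by linarith)
  set s : ℝ := β * (p - 2)
  have hs : s < 0 := mul_neg_of_pos_of_neg hβ (by linarith)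
  have hweight : (d : ℝ) * ((p - 2) / r - 1) - 1 + d = s - 1 := by ring
  have hexp : s / β + 1 = p - 1 := by rw [mul_div_cancel_left₀ _ hβ.ne']; ring
  set T : ℝ → ℝ≥0∞ := fun x => P {ω | x < |Y ω|}
  have hT : Measurable (fun x => T x * ENNReal.ofReal x) :=
    (measurable_measure_lt P _).mul ENNReal.measurable_ofReal
  calc _ ≤ ∑' n : ℕ+, 2 * ENNReal.ofReal M * (ENNReal.ofReal (((n : ℕ) : ℝ) ^ (s - 1)) *
          ∫⁻ x in Ioo 0 (((n : ℕ) : ℝ) ^ β), T x * ENNReal.ofReal x) := by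
        refine ENNReal.tsum_le_tsum fun n => ?_
        rw [← hweight]
        exact ofReal_rpow_mul_sum_setLIntegral_sq_le P hX Y M hMD n _ _
    _ = 2 * ENNReal.ofReal M * ∫⁻ x in Ioi 0, (∑' n : ℕ+, if x < ((n : ℕ) : ℝ) ^ β
          then ENNReal.ofReal (((n : ℕ) : ℝ) ^ (s - 1)) else 0) * (T x * ENNReal.ofReal x) := by
        rw [ENNReal.tsum_mul_left, tsum_mul_setLIntegral_Ioo _ _ hT]
    _ ≤ 2 * ENNReal.ofReal M * (ENNReal.ofReal (1 - s⁻¹) *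
          ∫⁻ x in Ioi 0, T x * ENNReal.ofReal (x ^ (p - 1))) := by
        rw [← hexp]
        exact mul_le_mul_right (setLIntegral_tsum_ite_mul_le hβ hs T) _
    _ < ∞ := ENNReal.mul_lt_top (by finiteness) (ENNReal.mul_lt_top ENNReal.ofReal_lt_top
        (lintegral_tail_mul_rpow_lt_top P hY (by linarith) hmom))

theorem stmt13 {Ω : Type*} [MeasurableSpace Ω] (P : Measure Ω) [IsProbabilityMeasure P]
    {d : ℕ} (hd : 1 ≤ d)
    (X : (Fin d → ℕ+) → Ω → ℝ) (Y : Ω → ℝ)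
    (hX : ∀ k, Measurable (X k)) (hY : Measurable Y)
    (M : ℝ) (hM : 0 ≤ M)
    (hMD : ∀ x : ℝ, 0 ≤ x → ∀ n : Fin d → ℕ+,
      ∑ k ∈ Finset.Icc 1 n, P {ω : Ω | x < |X k ω|}
        ≤ (pidx n : ℝ≥0∞) * ENNReal.ofReal M * P {ω : Ω | x < |Y ω|})
    (p r : ℝ) (hp1 : 1 ≤ p) (hp2 : p < 2) (hr1 : 1 ≤ r) (hrp : r ≤ p)
    (hmom : ∫⁻ ω, ENNReal.ofReal (|Y ω| ^ p) ∂P < ∞) :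
    ∑' n : ℕ+,
      ENNReal.ofReal (((n : ℕ) : ℝ) ^ ((d : ℝ) * ((p - 2) / r - 1) - 1)) *
        ∑ k ∈ Finset.Icc 1 (fun _ : Fin d => n),
          ∫⁻ ω in {ω : Ω | |X k ω| ≤ ((n : ℕ) : ℝ) ^ ((d : ℝ) / r)},
            ENNReal.ofReal (X k ω ^ 2) ∂P < ∞ :=
  stmt13_general P hd X Y hX hY M hMD p r hp1 hp2 hr1 hmom
end

section
/- Let {X_n : n ∈ (ℤ₊)^d} satisfy condition (MD): (1/|n|) ∑_{k ⪯ n} P(|X_k| > x) ≤ M P(|X| > x) for all x ≥ 0 and n. If E[|X| log⁺|X|] < ∞, then ∑_{n=1}^∞ n^{-d-1} ∑_{k ⪯ N} E[|X_k|·1{|X_k| > n^d}] < ∞, where N = (n,…,n). -/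
open MeasureTheory ENNReal

private lemma aux1 (z : ℝ) (a : ℕ) :
    ENNReal.ofReal z * (if (a : ℝ) < z then 1 else 0)
      ≤ (a : ℝ≥0∞) * (if (a : ℝ) < z then 1 else 0)
        + ∑' j : ℕ, (if ((a + j : ℕ) : ℝ) < z then (1 : ℝ≥0∞) else 0) := by
  by_cases h : (a : ℝ) < z
  · simp only [h, if_true, mul_one]
    set c := ⌈z⌉₊ with hc
    have hac : a < c := by
      have : (a : ℝ) < (c : ℝ) := lt_of_lt_of_le h (Nat.le_ceil z)
      exact_mod_cast this
    have hsum : ((c - a : ℕ) : ℝ≥0∞)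
        ≤ ∑' j : ℕ, (if ((a + j : ℕ) : ℝ) < z then (1 : ℝ≥0∞) else 0) := by
      have h1 : ∀ j ∈ Finset.range (c - a),
          (if ((a + j : ℕ) : ℝ) < z then (1 : ℝ≥0∞) else 0) = 1 := by
        intro j hj
        rw [if_pos]
        rw [← hc] at *
        exact Nat.lt_ceil.mp (by simp at hj; omega)
      calc ((c - a : ℕ) : ℝ≥0∞)
          = ∑ j ∈ Finset.range (c - a), (1 : ℝ≥0∞) := by simp
        _ = ∑ j ∈ Finset.range (c - a),
              (if ((a + j : ℕ) : ℝ) < z then (1 : ℝ≥0∞) else 0) :=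
            (Finset.sum_congr rfl h1).symm
        _ ≤ _ := ENNReal.sum_le_tsum _
    calc ENNReal.ofReal z ≤ ((c : ℕ) : ℝ≥0∞) := by
          rw [← ENNReal.ofReal_natCast c]
          exact ENNReal.ofReal_le_ofReal (Nat.le_ceil z)
      _ = (a : ℝ≥0∞) + ((c - a : ℕ) : ℝ≥0∞) := by
          rw [← Nat.cast_add]; congr 1; omega
      _ ≤ _ := add_le_add (le_refl _) hsum
  · simp [h]

private lemma aux2 (z : ℝ) (a : ℕ) (ha : 1 ≤ a) :
    ∑' j : ℕ, (if ((a + j : ℕ) : ℝ) < z then (1 : ℝ≥0∞) else 0)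
      ≤ ENNReal.ofReal z * (if (a : ℝ) < z then 1 else 0) := by
  by_cases h : (a : ℝ) < z
  · simp only [h, if_true, mul_one]
    have hz0 : (0 : ℝ) ≤ z := le_of_lt (lt_of_le_of_lt (Nat.cast_nonneg a) h)
    have hout : ∀ j ∉ Finset.range ⌊z⌋₊,
        (if ((a + j : ℕ) : ℝ) < z then (1 : ℝ≥0∞) else 0) = 0 := by
      intro j hj
      rw [if_neg]
      intro hlt
      apply hj
      simp only [Finset.mem_range]
      have h1 : ((j + 1 : ℕ) : ℝ) ≤ ((a + j : ℕ) : ℝ) := by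
        have : (1 : ℝ) ≤ (a : ℝ) := by exact_mod_cast ha
        push_cast
        linarith
      have : j + 1 ≤ ⌊z⌋₊ := Nat.le_floor (le_of_lt (lt_of_le_of_lt h1 hlt))
      omega
    rw [tsum_eq_sum hout]
    calc ∑ j ∈ Finset.range ⌊z⌋₊, (if ((a + j : ℕ) : ℝ) < z then (1 : ℝ≥0∞) else 0)
        ≤ ∑ j ∈ Finset.range ⌊z⌋₊, (1 : ℝ≥0∞) :=
          Finset.sum_le_sum fun j _ => by split <;> simp
      _ = ((⌊z⌋₊ : ℕ) : ℝ≥0∞) := by simp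
      _ ≤ ENNReal.ofReal z := by
          rw [← ENNReal.ofReal_natCast]
          exact ENNReal.ofReal_le_ofReal (Nat.floor_le hz0)
  · have hz : ∀ j : ℕ, ¬ (((a + j : ℕ) : ℝ) < z) := by
      intro j hj
      exact h (lt_of_le_of_lt (by push_cast; linarith [Nat.cast_nonneg (α := ℝ) j]) hj)
    have h0 : ∀ j : ℕ, (if ((a + j : ℕ) : ℝ) < z then (1 : ℝ≥0∞) else 0) = 0 :=
      fun j => if_neg (hz j)
    rw [tsum_congr h0, tsum_zero]
    exact zero_le

private lemma aux3 (z : ℝ) (d : ℕ) (hd : 1 ≤ d) :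
    ∑' i : ℕ, (((i + 1 : ℕ)) : ℝ≥0∞)⁻¹ * (if (((i + 1) ^ d : ℕ) : ℝ) < z then 1 else 0)
      ≤ ENNReal.ofReal (2 * max 1 (Real.log z)) := by
  by_cases hz : 1 < z
  · have hz0 : (0 : ℝ) ≤ z := by linarith
    set m := ⌊z⌋₊ with hm
    have hm1 : 1 ≤ m := Nat.le_floor (by norm_num; linarith)
    have hout : ∀ i ∉ Finset.range m,
        (((i + 1 : ℕ)) : ℝ≥0∞)⁻¹ * (if (((i + 1) ^ d : ℕ) : ℝ) < z then 1 else 0) = 0 := by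
      intro i hi
      rw [if_neg, mul_zero]
      intro hlt
      apply hi
      simp only [Finset.mem_range]
      have h1 : (i + 1 : ℕ) ≤ (i + 1) ^ d := Nat.le_self_pow (by omega) _
      have h2 : ((i + 1 : ℕ) : ℝ) ≤ (((i + 1) ^ d : ℕ) : ℝ) := by exact_mod_cast h1
      have h3 : i + 1 ≤ m := Nat.le_floor (le_of_lt (lt_of_le_of_lt h2 hlt))
      omega
    rw [tsum_eq_sum hout]
    have hle : ∑ i ∈ Finset.range m,
          (((i + 1 : ℕ)) : ℝ≥0∞)⁻¹ * (if (((i + 1) ^ d : ℕ) : ℝ) < z then 1 else 0)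
        ≤ ∑ i ∈ Finset.range m, (((i + 1 : ℕ)) : ℝ≥0∞)⁻¹ :=
      Finset.sum_le_sum fun i _ => by split <;> simp
    refine hle.trans ?_
    have heq : ∑ i ∈ Finset.range m, (((i + 1 : ℕ)) : ℝ≥0∞)⁻¹
        = ENNReal.ofReal (∑ i ∈ Finset.range m, (((i + 1 : ℕ)) : ℝ)⁻¹) := by
      rw [ENNReal.ofReal_sum_of_nonneg (fun i _ => by positivity)]
      exact Finset.sum_congr rfl fun i _ => by
        rw [ENNReal.ofReal_inv_of_pos (by positivity), ENNReal.ofReal_natCast]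
    rw [heq]
    apply ENNReal.ofReal_le_ofReal
    have hh : ∑ i ∈ Finset.range m, (((i + 1 : ℕ)) : ℝ)⁻¹ = (harmonic m : ℝ) := by
      rw [harmonic]; push_cast; rfl
    rw [hh]
    have hlog : (harmonic m : ℝ) ≤ 1 + Real.log m := harmonic_le_one_add_log m
    have hmz : (m : ℝ) ≤ z := Nat.floor_le hz0
    have hmpos : (0 : ℝ) < m := by exact_mod_cast hm1
    have hlogm : Real.log m ≤ Real.log z := Real.log_le_log hmpos hmz
    have h1 : (1 : ℝ) ≤ max 1 (Real.log z) := le_max_left _ _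
    have h2 : Real.log z ≤ max 1 (Real.log z) := le_max_right _ _
    linarith
  · have hz' : ∀ i : ℕ, ¬ ((((i + 1) ^ d : ℕ) : ℝ) < z) := by
      intro i hlt
      have h1 : (1 : ℕ) ≤ (i + 1) ^ d := Nat.one_le_pow _ _ (Nat.succ_pos i)
      have : (1 : ℝ) ≤ (((i + 1) ^ d : ℕ) : ℝ) := by exact_mod_cast h1
      exact hz (lt_of_le_of_lt this hlt)
    have h0 : ∀ i : ℕ,
        (((i + 1 : ℕ)) : ℝ≥0∞)⁻¹ * (if (((i + 1) ^ d : ℕ) : ℝ) < z then 1 else 0) = 0 :=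
      fun i => by rw [if_neg (hz' i), mul_zero]
    rw [tsum_congr h0, tsum_zero]
    exact zero_le


private lemma ite_meas {Ω : Type*} [MeasurableSpace Ω] {Z : Ω → ℝ} (hZ : Measurable Z) (b : ℝ) :
    Measurable fun ω => (if b < |Z ω| then (1 : ℝ≥0∞) else 0) :=
  Measurable.ite (measurableSet_lt measurable_const hZ.abs) measurable_const measurable_const

private lemma lint_ite {Ω : Type*} [MeasurableSpace Ω] (P : Measure Ω) {Z : Ω → ℝ}
    (hZ : Measurable Z) (b : ℝ) :
    ∫⁻ ω, (if b < |Z ω| then (1 : ℝ≥0∞) else 0) ∂P = P {ω | b < |Z ω|} := by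
  have h : (fun ω => (if b < |Z ω| then (1 : ℝ≥0∞) else 0))
      = Set.indicator {ω | b < |Z ω|} (fun _ => (1 : ℝ≥0∞)) := by
    ext ω; by_cases h : b < |Z ω| <;> simp [Set.indicator, h]
  rw [h]
  exact lintegral_indicator_one (measurableSet_lt measurable_const hZ.abs)

private lemma setI {Ω : Type*} [MeasurableSpace Ω] (P : Measure Ω) {Z : Ω → ℝ}
    (hZ : Measurable Z) (b : ℝ) :
    ∫⁻ ω in {ω | b < |Z ω|}, ENNReal.ofReal |Z ω| ∂P
      = ∫⁻ ω, ENNReal.ofReal |Z ω| * (if b < |Z ω| then 1 else 0) ∂P := by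
  rw [← lintegral_indicator (measurableSet_lt measurable_const hZ.abs)]
  congr 1; ext ω; by_cases h : b < |Z ω| <;> simp [Set.indicator, h]

private lemma tail_int {Ω : Type*} [MeasurableSpace Ω] (P : Measure Ω) {Z : Ω → ℝ}
    (hZ : Measurable Z) (a : ℕ) :
    ∫⁻ ω in {ω | (a : ℝ) < |Z ω|}, ENNReal.ofReal |Z ω| ∂P
      ≤ (a : ℝ≥0∞) * P {ω | (a : ℝ) < |Z ω|}
        + ∑' j : ℕ, P {ω | ((a + j : ℕ) : ℝ) < |Z ω|} := by
  rw [setI P hZ]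
  calc ∫⁻ ω, ENNReal.ofReal |Z ω| * (if (a : ℝ) < |Z ω| then 1 else 0) ∂P
      ≤ ∫⁻ ω, ((a : ℝ≥0∞) * (if (a : ℝ) < |Z ω| then 1 else 0)
          + ∑' j : ℕ, (if ((a + j : ℕ) : ℝ) < |Z ω| then (1 : ℝ≥0∞) else 0)) ∂P :=
        lintegral_mono fun ω => aux1 |Z ω| a
    _ = (a : ℝ≥0∞) * P {ω | (a : ℝ) < |Z ω|}
        + ∑' j : ℕ, P {ω | ((a + j : ℕ) : ℝ) < |Z ω|} := by
        rw [lintegral_add_left ((ite_meas hZ _).const_mul _)]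
        congr 1
        · rw [lintegral_const_mul _ (ite_meas hZ _), lint_ite P hZ]
        · rw [lintegral_tsum fun j => (ite_meas hZ _).aemeasurable]
          exact tsum_congr fun j => lint_ite P hZ _

private lemma tail_sum {Ω : Type*} [MeasurableSpace Ω] (P : Measure Ω) {Z : Ω → ℝ}
    (hZ : Measurable Z) (a : ℕ) (ha : 1 ≤ a) :
    ∑' j : ℕ, P {ω | ((a + j : ℕ) : ℝ) < |Z ω|}
      ≤ ∫⁻ ω in {ω | (a : ℝ) < |Z ω|}, ENNReal.ofReal |Z ω| ∂P := by
  rw [setI P hZ]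
  calc ∑' j : ℕ, P {ω | ((a + j : ℕ) : ℝ) < |Z ω|}
      = ∫⁻ ω, ∑' j : ℕ, (if ((a + j : ℕ) : ℝ) < |Z ω| then (1 : ℝ≥0∞) else 0) ∂P := by
        rw [lintegral_tsum fun j => (ite_meas hZ _).aemeasurable]
        exact (tsum_congr fun j => lint_ite P hZ _).symm
    _ ≤ _ := lintegral_mono fun ω => aux2 |Z ω| a ha

private lemma level_int {Ω : Type*} [MeasurableSpace Ω] (P : Measure Ω) {Z : Ω → ℝ}
    (hZ : Measurable Z) (a : ℕ) :
    (a : ℝ≥0∞) * P {ω | (a : ℝ) < |Z ω|}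
      ≤ ∫⁻ ω in {ω | (a : ℝ) < |Z ω|}, ENNReal.ofReal |Z ω| ∂P := by
  calc (a : ℝ≥0∞) * P {ω | (a : ℝ) < |Z ω|}
      = ∫⁻ _ in {ω | (a : ℝ) < |Z ω|}, (a : ℝ≥0∞) ∂P := (setLIntegral_const _ _).symm
    _ ≤ _ := setLIntegral_mono hZ.abs.ennreal_ofReal fun ω hω => by
        rw [← ENNReal.ofReal_natCast a]
        exact ENNReal.ofReal_le_ofReal (le_of_lt hω)

theorem stmt14 {Ω : Type*} [MeasurableSpace Ω] (P : Measure Ω) [IsProbabilityMeasure P]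
    {d : ℕ} (hd : 1 ≤ d)
    (X : (Fin d → ℕ+) → Ω → ℝ) (Y : Ω → ℝ)
    (hX : ∀ k, Measurable (X k)) (hY : Measurable Y)
    (M : ℝ) (hM : 0 ≤ M)
    (hMD : ∀ x : ℝ, 0 ≤ x → ∀ n : Fin d → ℕ+,
      ∑ k ∈ Finset.Icc 1 n, P {ω : Ω | x < |X k ω|}
        ≤ (pidx n : ℝ≥0∞) * ENNReal.ofReal M * P {ω : Ω | x < |Y ω|})
    (hmom : ∫⁻ ω, ENNReal.ofReal (|Y ω| * max 1 (Real.log |Y ω|)) ∂P < ∞) :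
    ∑' n : ℕ+,
      ENNReal.ofReal (((n : ℕ) : ℝ) ^ (-(d : ℝ) - 1)) *
        ∑ k ∈ Finset.Icc 1 (fun _ : Fin d => n),
          ∫⁻ ω in {ω : Ω | ((n : ℕ) : ℝ) ^ (d : ℕ) < |X k ω|},
            ENNReal.ofReal |X k ω| ∂P < ∞ := by
  classical
  set M' := ENNReal.ofReal M with hM'def
  set I : ℕ → ℝ≥0∞ :=
    fun a => ∫⁻ ω in {ω | (a : ℝ) < |Y ω|}, ENNReal.ofReal |Y ω| ∂P with hIdef
  have claim1 : ∀ n : ℕ+,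
      ENNReal.ofReal (((n : ℕ) : ℝ) ^ (-(d : ℝ) - 1)) *
        ∑ k ∈ Finset.Icc 1 (fun _ : Fin d => n),
          ∫⁻ ω in {ω : Ω | ((n : ℕ) : ℝ) ^ (d : ℕ) < |X k ω|},
            ENNReal.ofReal |X k ω| ∂P
      ≤ 2 * M' * ((((n : ℕ)) : ℝ≥0∞)⁻¹ * I ((n : ℕ) ^ d)) := by
    intro n
    set a : ℕ := (n : ℕ) ^ d with hadef
    have hca : ((a : ℕ) : ℝ) = ((n : ℕ) : ℝ) ^ (d : ℕ) := by
      rw [hadef]; push_cast; ring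
    have hsetX : ∀ k, {ω : Ω | ((n : ℕ) : ℝ) ^ (d : ℕ) < |X k ω|}
        = {ω : Ω | (a : ℝ) < |X k ω|} := by
      intro k; rw [hca]
    have hpidx : pidx (fun _ : Fin d => n) = a := by
      rw [hadef]
      simp [pidx, Finset.prod_const, Finset.card_univ]
    have ha1 : 1 ≤ a := by rw [hadef]; exact Nat.one_le_pow _ _ n.pos
    have hMDa : ∀ b : ℕ,
        ∑ k ∈ Finset.Icc 1 (fun _ : Fin d => n), P {ω | (b : ℝ) < |X k ω|}
          ≤ (a : ℝ≥0∞) * M' * P {ω | (b : ℝ) < |Y ω|} := by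
      intro b
      have h := hMD (b : ℝ) (Nat.cast_nonneg b) (fun _ => n)
      rwa [hpidx] at h
    have hinner : ∑ k ∈ Finset.Icc 1 (fun _ : Fin d => n),
          ∫⁻ ω in {ω | (a : ℝ) < |X k ω|}, ENNReal.ofReal |X k ω| ∂P
        ≤ (a : ℝ≥0∞) * M' * (2 * I a) := by
      calc ∑ k ∈ Finset.Icc 1 (fun _ : Fin d => n),
            ∫⁻ ω in {ω | (a : ℝ) < |X k ω|}, ENNReal.ofReal |X k ω| ∂P
          ≤ ∑ k ∈ Finset.Icc 1 (fun _ : Fin d => n),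
              ((a : ℝ≥0∞) * P {ω | (a : ℝ) < |X k ω|}
                + ∑' j : ℕ, P {ω | ((a + j : ℕ) : ℝ) < |X k ω|}) :=
            Finset.sum_le_sum fun k _ => tail_int P (hX k) a
        _ = (a : ℝ≥0∞) * ∑ k ∈ Finset.Icc 1 (fun _ : Fin d => n),
              P {ω | (a : ℝ) < |X k ω|}
            + ∑' j : ℕ, ∑ k ∈ Finset.Icc 1 (fun _ : Fin d => n),
                P {ω | ((a + j : ℕ) : ℝ) < |X k ω|} := by
            rw [Finset.sum_add_distrib, ← Finset.mul_sum,
              Summable.tsum_finsetSum fun k _ => ENNReal.summable]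
        _ ≤ (a : ℝ≥0∞) * ((a : ℝ≥0∞) * M' * P {ω | ((a : ℕ) : ℝ) < |Y ω|})
            + ∑' j : ℕ, ((a : ℝ≥0∞) * M' * P {ω | ((a + j : ℕ) : ℝ) < |Y ω|}) :=
            add_le_add (mul_le_mul_right (hMDa a) _)
              (ENNReal.tsum_le_tsum fun j => hMDa (a + j))
        _ = (a : ℝ≥0∞) * M' * ((a : ℝ≥0∞) * P {ω | ((a : ℕ) : ℝ) < |Y ω|}
            + ∑' j : ℕ, P {ω | ((a + j : ℕ) : ℝ) < |Y ω|}) := by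
            rw [ENNReal.tsum_mul_left]; ring
        _ ≤ (a : ℝ≥0∞) * M' * (I a + I a) :=
            mul_le_mul_right (add_le_add (level_int P hY a) (tail_sum P hY a ha1)) _
        _ = (a : ℝ≥0∞) * M' * (2 * I a) := by ring
    have hkey : ENNReal.ofReal (((n : ℕ) : ℝ) ^ (-(d : ℝ) - 1)) * ((a : ℕ) : ℝ≥0∞)
        = (((n : ℕ)) : ℝ≥0∞)⁻¹ := by
      have hnR : (0 : ℝ) < ((n : ℕ) : ℝ) := by exact_mod_cast n.pos
      have hr : ((n : ℕ) : ℝ) ^ (-(d : ℝ) - 1) = (((n : ℕ) : ℝ) ^ (d + 1 : ℕ))⁻¹ := by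
        rw [show (-(d : ℝ) - 1) = -(((d + 1 : ℕ)) : ℝ) by push_cast; ring,
          Real.rpow_neg (le_of_lt hnR), Real.rpow_natCast]
      rw [hr, ENNReal.ofReal_inv_of_pos (pow_pos hnR _),
        ENNReal.ofReal_pow (le_of_lt hnR), ENNReal.ofReal_natCast, hadef, Nat.cast_pow]
      set x : ℝ≥0∞ := ((n : ℕ) : ℝ≥0∞) with hxdef
      have hx0 : x ≠ 0 := by
        rw [hxdef]; exact Nat.cast_ne_zero.mpr n.pos.ne'
      have hxt : x ≠ ∞ := by rw [hxdef]; exact ENNReal.natCast_ne_top _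
      rw [pow_succ,
        ENNReal.mul_inv (Or.inl (pow_ne_zero _ hx0)) (Or.inl (ENNReal.pow_ne_top hxt)),
        mul_comm ((x ^ d)⁻¹) x⁻¹, mul_assoc,
        ENNReal.inv_mul_cancel (pow_ne_zero _ hx0) (ENNReal.pow_ne_top hxt), mul_one]
    calc ENNReal.ofReal (((n : ℕ) : ℝ) ^ (-(d : ℝ) - 1)) *
        ∑ k ∈ Finset.Icc 1 (fun _ : Fin d => n),
          ∫⁻ ω in {ω : Ω | ((n : ℕ) : ℝ) ^ (d : ℕ) < |X k ω|},
            ENNReal.ofReal |X k ω| ∂P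
        = ENNReal.ofReal (((n : ℕ) : ℝ) ^ (-(d : ℝ) - 1)) *
          ∑ k ∈ Finset.Icc 1 (fun _ : Fin d => n),
            ∫⁻ ω in {ω | (a : ℝ) < |X k ω|}, ENNReal.ofReal |X k ω| ∂P := by
          congr 1
          exact Finset.sum_congr rfl fun k _ => by rw [hsetX k]
      _ ≤ ENNReal.ofReal (((n : ℕ) : ℝ) ^ (-(d : ℝ) - 1)) *
            ((a : ℝ≥0∞) * M' * (2 * I a)) := mul_le_mul_right hinner _
      _ = (ENNReal.ofReal (((n : ℕ) : ℝ) ^ (-(d : ℝ) - 1)) * ((a : ℕ) : ℝ≥0∞)) *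
            (M' * (2 * I a)) := by ring
      _ = (((n : ℕ)) : ℝ≥0∞)⁻¹ * (M' * (2 * I a)) := by rw [hkey]
      _ = 2 * M' * ((((n : ℕ)) : ℝ≥0∞)⁻¹ * I a) := by ring
  have claim2 : ∑' n : ℕ+, 2 * M' * ((((n : ℕ)) : ℝ≥0∞)⁻¹ * I ((n : ℕ) ^ d)) < ∞ := by
    rw [ENNReal.tsum_mul_left]
    refine ENNReal.mul_lt_top ?_ ?_
    · exact ENNReal.mul_lt_top (by norm_num) ENNReal.ofReal_lt_top
    · have hEq : ∑' n : ℕ+, (((n : ℕ)) : ℝ≥0∞)⁻¹ * I ((n : ℕ) ^ d)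
          = ∑' i : ℕ, (((i + 1 : ℕ)) : ℝ≥0∞)⁻¹ * I ((i + 1) ^ d) := by
        rw [← Equiv.pnatEquivNat.symm.tsum_eq
          (fun n : ℕ+ => (((n : ℕ)) : ℝ≥0∞)⁻¹ * I ((n : ℕ) ^ d))]
        exact tsum_congr fun i => by
          simp [Equiv.pnatEquivNat, Nat.succPNat]
      rw [hEq]
      have hmeas : ∀ i : ℕ, Measurable fun ω =>
          (((i + 1 : ℕ)) : ℝ≥0∞)⁻¹ * (ENNReal.ofReal |Y ω| *
            (if (((i + 1) ^ d : ℕ) : ℝ) < |Y ω| then 1 else 0)) :=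
        fun i => measurable_const.mul (hY.abs.ennreal_ofReal.mul (ite_meas hY _))
      have hterm : ∀ i : ℕ, (((i + 1 : ℕ)) : ℝ≥0∞)⁻¹ * I ((i + 1) ^ d)
          = ∫⁻ ω, (((i + 1 : ℕ)) : ℝ≥0∞)⁻¹ * (ENNReal.ofReal |Y ω| *
              (if (((i + 1) ^ d : ℕ) : ℝ) < |Y ω| then 1 else 0)) ∂P := by
        intro i
        rw [hIdef]
        simp only
        rw [setI P hY, ← lintegral_const_mul (f := fun ω => ENNReal.ofReal |Y ω| *
          (if (((i + 1) ^ d : ℕ) : ℝ) < |Y ω| then 1 else 0)) _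
          (hY.abs.ennreal_ofReal.mul (ite_meas hY _))]
      calc ∑' i : ℕ, (((i + 1 : ℕ)) : ℝ≥0∞)⁻¹ * I ((i + 1) ^ d)
          = ∫⁻ ω, ∑' i : ℕ, (((i + 1 : ℕ)) : ℝ≥0∞)⁻¹ * (ENNReal.ofReal |Y ω| *
              (if (((i + 1) ^ d : ℕ) : ℝ) < |Y ω| then 1 else 0)) ∂P := by
            rw [tsum_congr hterm, ← lintegral_tsum fun i => (hmeas i).aemeasurable]
        _ ≤ ∫⁻ ω, ENNReal.ofReal (2 * (|Y ω| * max 1 (Real.log |Y ω|))) ∂P := by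
            refine lintegral_mono fun ω => ?_
            have hsplit : ∀ i : ℕ, (((i + 1 : ℕ)) : ℝ≥0∞)⁻¹ * (ENNReal.ofReal |Y ω| *
                (if (((i + 1) ^ d : ℕ) : ℝ) < |Y ω| then 1 else 0))
              = ENNReal.ofReal |Y ω| * ((((i + 1 : ℕ)) : ℝ≥0∞)⁻¹ *
                (if (((i + 1) ^ d : ℕ) : ℝ) < |Y ω| then 1 else 0)) := fun i => by ring
            rw [tsum_congr hsplit, ENNReal.tsum_mul_left]
            calc ENNReal.ofReal |Y ω| * ∑' i : ℕ, ((((i + 1 : ℕ)) : ℝ≥0∞)⁻¹ *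
                  (if (((i + 1) ^ d : ℕ) : ℝ) < |Y ω| then 1 else 0))
                ≤ ENNReal.ofReal |Y ω| * ENNReal.ofReal (2 * max 1 (Real.log |Y ω|)) :=
                  mul_le_mul_right (aux3 |Y ω| d hd) _
              _ = ENNReal.ofReal (|Y ω| * (2 * max 1 (Real.log |Y ω|))) :=
                  (ENNReal.ofReal_mul (abs_nonneg _)).symm
              _ = ENNReal.ofReal (2 * (|Y ω| * max 1 (Real.log |Y ω|))) := by ring_nf
        _ = 2 * ∫⁻ ω, ENNReal.ofReal (|Y ω| * max 1 (Real.log |Y ω|)) ∂P := by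
            rw [← lintegral_const_mul' 2 _ (by norm_num)]
            congr 1
            funext ω
            rw [ENNReal.ofReal_mul (by norm_num : (0:ℝ) ≤ 2)]
            norm_num
        _ < ∞ := ENNReal.mul_lt_top (by norm_num) hmom
  exact lt_of_le_of_lt (ENNReal.tsum_le_tsum claim1) claim2
end

section
/- Let {X_n : n ∈ (ℤ₊)^d} be complex-integrable random variables satisfying condition (MD) with dominating variable X having E|X| < ∞. For t ∈ [-π,π)^d define S_n(t) = ∑_{k ⪯ n} e^{i k·t} X_k. Then ∫_{Ω×[-π,π)^d} |S_n(t)|/|n| d(P×L) → 0 as max{n₁,…,n_d} → ∞, where L is Lebesgue measure on [-π,π)^d; i.e., S_n(t)/|n| → 0 in L¹ of the product space. -/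
open MeasureTheory ENNReal
open Set

noncomputable def mu1 : Measure ℝ := (volume : Measure ℝ).restrict (Set.Ico (-Real.pi) Real.pi)

instance : IsFiniteMeasure mu1 :=
  ⟨by rw [mu1, Measure.restrict_apply_univ]; exact measure_Ico_lt_top⟩

lemma mu1_univ : mu1 Set.univ = ENNReal.ofReal (2 * Real.pi) := by
  rw [mu1, Measure.restrict_apply_univ, Real.volume_Ico]
  ring_nf

lemma int1 (m : ℤ) :
    ∫ s, Complex.exp (Complex.I * m * s) ∂mu1 = if m = 0 then ((2*Real.pi : ℝ) : ℂ) else 0 := by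
  have hle : -Real.pi ≤ Real.pi := by linarith [Real.pi_pos]
  rw [mu1, integral_Ico_eq_integral_Ioo]
  rw [show (∫ s in Set.Ioo (-Real.pi) Real.pi, Complex.exp (Complex.I * m * s)) = ∫ s in (-Real.pi)..Real.pi, Complex.exp (Complex.I * m * s) by rw [intervalIntegral.integral_of_le hle, integral_Ioc_eq_integral_Ioo]]
  rcases eq_or_ne m 0 with h | h
  · simp only [h, if_pos, Int.cast_zero, mul_zero, zero_mul, Complex.exp_zero]
    rw [intervalIntegral.integral_const, Complex.real_smul]
    push_cast
    ring
  · have hc : (Complex.I * m) ≠ 0 := by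
      simp [Complex.I_ne_zero, Complex.ext_iff]
      exact_mod_cast h
    have := integral_exp_mul_complex (a := -Real.pi) (b := Real.pi) hc
    simp only [mul_assoc] at this ⊢
    rw [this, if_neg h]
    have hsin : Complex.sin (m * Real.pi) = 0 := by exact_mod_cast Complex.sin_int_mul_pi m
    have h1 : Complex.I * ↑m * ↑Real.pi = (↑m * ↑Real.pi) * Complex.I := by ring
    have h2 : Complex.I * ↑m * ↑(-Real.pi) = (-(↑m * ↑Real.pi)) * Complex.I := by push_cast; ring
    rw [_root_.div_eq_zero_iff]
    left
    rw [show Complex.I * (↑m * ↑Real.pi) = (↑m * ↑Real.pi) * Complex.I by ring,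
        show Complex.I * (↑m * ↑(-Real.pi)) = (-(↑m * ↑Real.pi)) * Complex.I by push_cast; ring,
        Complex.exp_mul_I, Complex.exp_mul_I, Complex.sin_neg, Complex.cos_neg, hsin]
    ring

def R1 : Type := ℝ
instance : MeasurableSpace R1 := Real.measurableSpace
noncomputable instance : MeasureSpace R1 := ⟨mu1⟩
instance : IsFiniteMeasure (volume : Measure R1) := inferInstanceAs (IsFiniteMeasure mu1)


noncomputable def nud (d : ℕ) : Measure (Fin d → ℝ) := Measure.pi fun _ => mu1

instance (d : ℕ) : IsFiniteMeasure (nud d) := inferInstanceAs (IsFiniteMeasure (Measure.pi _))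

lemma prod_integral {d : ℕ} (f : Fin d → ℝ → ℂ) :
    ∫ t : Fin d → ℝ, ∏ i, f i (t i) ∂(nud d) = ∏ i, ∫ s, f i s ∂mu1 :=
  MeasureTheory.integral_fintype_prod_eq_prod (ι := Fin d) (E := fun _ => R1) (μ := fun _ => (volume : Measure R1))
    (f := fun i (x : R1) => f i x)


lemma nud_univ (d : ℕ) : nud d Set.univ = ENNReal.ofReal ((2*Real.pi)^d) := by
  rw [nud, Measure.pi_univ]
  simp [mu1_univ, ← ENNReal.ofReal_pow (by positivity : (0:ℝ) ≤ 2*Real.pi)]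
  rw [ENNReal.ofReal_pow (by positivity), ENNReal.ofReal_mul (by norm_num), ENNReal.ofReal_ofNat]

lemma hconj (r : ℝ) : (starRingEnd ℂ) (Complex.exp (Complex.I * r)) = Complex.exp (-(Complex.I * r)) := by
  rw [← Complex.exp_conj]; congr 1; simp

lemma key_pointwise {d : ℕ} (A : Finset (Fin d → ℕ+)) (c : (Fin d → ℕ+) → ℂ) (t : Fin d → ℝ) :
    (Complex.normSq (∑ k ∈ A,
        Complex.exp (Complex.I * ((∑ i, ((k i : ℕ) : ℝ) * t i : ℝ) : ℂ)) * c k) : ℂ)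
    = ∑ p ∈ A ×ˢ A, (c p.1 * (starRingEnd ℂ) (c p.2)) *
        ∏ i, Complex.exp (Complex.I * ((((p.1 i : ℕ) : ℤ) - ((p.2 i : ℕ) : ℤ) : ℤ) : ℂ) * (t i : ℂ)) := by
  rw [← Complex.mul_conj, map_sum, Finset.sum_mul_sum, Finset.sum_product]
  apply Finset.sum_congr rfl
  intro k _
  apply Finset.sum_congr rfl
  intro j _
  rw [map_mul, hconj, ← Complex.exp_sum]
  have : (∑ i, Complex.I * ((((k i : ℕ) : ℤ) - ((j i : ℕ) : ℤ) : ℤ) : ℂ) * (t i : ℂ))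
      = Complex.I * ((∑ i, ((k i : ℕ) : ℝ) * t i : ℝ) : ℂ) + -(Complex.I * ((∑ i, ((j i : ℕ) : ℝ) * t i : ℝ) : ℂ)) := by
    push_cast
    rw [Finset.mul_sum, Finset.mul_sum, ← Finset.sum_neg_distrib, ← Finset.sum_add_distrib]
    apply Finset.sum_congr rfl
    intros; ring
  rw [this, Complex.exp_add]
  ring

lemma norm_exp_I_mul (z : ℂ) (s : ℝ) (hz : z.im = 0) : ‖Complex.exp (Complex.I * z * s)‖ = 1 := by
  rw [Complex.norm_exp]
  simp [Complex.mul_re, hz]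

lemma norm_exp_I_real (r : ℝ) : ‖Complex.exp (Complex.I * (r : ℂ))‖ = 1 := by
  rw [Complex.norm_exp]
  simp [Complex.mul_re]

lemma cont_prod_exp {d : ℕ} (m : Fin d → ℤ) :
    Continuous fun t : Fin d → ℝ => ∏ i, Complex.exp (Complex.I * ((m i : ℂ)) * (t i : ℂ)) := by
  apply continuous_finset_prod
  intro i _
  exact Complex.continuous_exp.comp (by fun_prop)

lemma integrable_term {d : ℕ} (C : ℂ) (m : Fin d → ℤ) :
    Integrable (fun t : Fin d → ℝ => C * ∏ i, Complex.exp (Complex.I * ((m i : ℂ)) * (t i : ℂ)))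
      (nud d) := by
  apply Integrable.mono' (integrable_const ‖C‖)
    ((continuous_const.mul (cont_prod_exp m)).aestronglyMeasurable)
  filter_upwards with t
  simp only [Pi.mul_apply]
  rw [norm_mul, norm_prod]
  have : ∀ i : Fin d, ‖Complex.exp (Complex.I * ((m i : ℂ)) * (t i : ℂ))‖ = 1 := fun i =>
    norm_exp_I_mul _ _ (by simp)
  simp [this]

lemma orth {d : ℕ} (n : Fin d → ℕ+) (c : (Fin d → ℕ+) → ℂ) :
    ∫ t, Complex.normSq (∑ k ∈ Finset.Icc 1 n,
        Complex.exp (Complex.I * ((∑ i, ((k i : ℕ) : ℝ) * t i : ℝ) : ℂ)) * c k) ∂(nud d)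
    = (2*Real.pi)^d * ∑ k ∈ Finset.Icc 1 n, Complex.normSq (c k) := by
  classical
  set A := Finset.Icc 1 n with hA
  have h2 : ∫ t, ((Complex.normSq (∑ k ∈ A,
        Complex.exp (Complex.I * ((∑ i, ((k i : ℕ) : ℝ) * t i : ℝ) : ℂ)) * c k) : ℂ)) ∂(nud d)
      = ((((2*Real.pi)^d * ∑ k ∈ A, Complex.normSq (c k) : ℝ)) : ℂ) := by
    simp_rw [key_pointwise]
    rw [integral_finset_sum _ (fun p _ => integrable_term _ _)]
    have hterm : ∀ p ∈ A ×ˢ A, (∫ t, (c p.1 * (starRingEnd ℂ) (c p.2)) *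
        ∏ i, Complex.exp (Complex.I * ((((p.1 i : ℕ) : ℤ) - ((p.2 i : ℕ) : ℤ) : ℤ) : ℂ) * (t i : ℂ)) ∂(nud d))
        = if p.1 = p.2 then (((2*Real.pi)^d : ℝ) : ℂ) * ((Complex.normSq (c p.1) : ℝ) : ℂ) else 0 := by
      intro p _
      rw [MeasureTheory.integral_const_mul, prod_integral (f := fun i s =>
        Complex.exp (Complex.I * ((((p.1 i : ℕ) : ℤ) - ((p.2 i : ℕ) : ℤ) : ℤ) : ℂ) * (s : ℂ)))]
      by_cases hp : p.1 = p.2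
      · have : ∀ i, (∫ s, Complex.exp (Complex.I * ((((p.1 i : ℕ) : ℤ) - ((p.2 i : ℕ) : ℤ) : ℤ) : ℂ) * (s : ℂ)) ∂mu1)
            = ((2*Real.pi : ℝ) : ℂ) := by
          intro i
          rw [int1 (((p.1 i : ℕ) : ℤ) - ((p.2 i : ℕ) : ℤ)), if_pos (by rw [hp]; ring)]
        rw [if_pos hp]
        simp only [this, Finset.prod_const, Finset.card_univ, Fintype.card_fin]
        rw [hp, Complex.mul_conj]
        push_cast
        ring
      · obtain ⟨i0, hi0⟩ : ∃ i, p.1 i ≠ p.2 i := by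
          by_contra h
          push_neg at h
          exact hp (funext h)
        rw [if_neg hp]
        apply mul_eq_zero_of_right
        apply Finset.prod_eq_zero (Finset.mem_univ i0)
        rw [int1, if_neg]
        simp only [sub_ne_zero, Ne]
        exact_mod_cast fun h => hi0 (PNat.coe_injective h)
    rw [Finset.sum_congr rfl hterm, Finset.sum_product]
    have : ∀ k ∈ A, (∑ j ∈ A, if (k, j).1 = (k, j).2 then (((2*Real.pi)^d : ℝ) : ℂ) * ((Complex.normSq (c (k, j).1) : ℝ) : ℂ) else 0)
        = (((2*Real.pi)^d : ℝ) : ℂ) * ((Complex.normSq (c k) : ℝ) : ℂ) := by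
      intro k hk
      simp only
      rw [Finset.sum_ite_eq A k (fun j => (((2*Real.pi)^d : ℝ) : ℂ) * ((Complex.normSq (c k) : ℝ) : ℂ)), if_pos hk]
    rw [Finset.sum_congr rfl this]
    push_cast
    rw [Finset.mul_sum]
  have h3 : ∫ t, ((Complex.normSq (∑ k ∈ A,
        Complex.exp (Complex.I * ((∑ i, ((k i : ℕ) : ℝ) * t i : ℝ) : ℂ)) * c k) : ℂ)) ∂(nud d)
      = (((∫ t, Complex.normSq (∑ k ∈ A,
        Complex.exp (Complex.I * ((∑ i, ((k i : ℕ) : ℝ) * t i : ℝ) : ℂ)) * c k) ∂(nud d) : ℝ)) : ℂ) :=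
    integral_ofReal
  rw [h3] at h2
  exact_mod_cast h2

lemma tail_eq {Ω : Type*} [MeasurableSpace Ω] (P : Measure Ω) (f : Ω → ℝ)
    (hf : Measurable f) (l : ℝ) (hl : 0 ≤ l) :
    ∫⁻ ω, ENNReal.ofReal (max (|f ω| - l) 0) ∂P
      = ∫⁻ x in Set.Ioi (0:ℝ), P {ω | l + x < |f ω|} := by
  rw [lintegral_eq_lintegral_meas_lt P (f := fun ω => max (|f ω| - l) 0)
    (Filter.Eventually.of_forall fun ω => le_max_right _ _)
    ((hf.abs.sub measurable_const).max measurable_const).aemeasurable]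
  apply setLIntegral_congr_fun measurableSet_Ioi
  intro x hx
  dsimp only
  congr 1
  ext ω
  simp only [Set.mem_setOf_eq, lt_max_iff]
  constructor
  · rintro (h | h)
    · linarith
    · exact absurd h (not_lt.mpr (le_of_lt hx))
  · intro h; left; linarith

lemma clamp_abs (x l : ℝ) (hl : 0 ≤ l) : |x - max (min x l) (-l)| = max (|x| - l) 0 := by
  rcases le_total x (-l) with h1 | h1
  · rw [min_eq_left (by linarith), max_eq_right h1, abs_of_nonpos (by linarith),
      abs_of_nonpos (by linarith), max_eq_left (by linarith)]
    ring
  · rcases le_total x l with h2 | h2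
    · rw [min_eq_left h2, max_eq_left h1, sub_self, abs_zero,
        max_eq_right (by cases abs_cases x with
          | inl h => linarith [h.1]
          | inr h => linarith [h.1])]
    · rw [min_eq_right h2, abs_of_nonneg (by linarith : (0:ℝ) ≤ x), max_eq_left (by linarith),
        abs_of_nonneg (by linarith), max_eq_left (by linarith)]

lemma clamp_abs_le (x l : ℝ) (hl : 0 ≤ l) : |max (min x l) (-l)| ≤ l := by
  rw [abs_le]
  constructor
  · exact le_max_right _ _
  · exact max_le (min_le_right _ _) (by linarith)

lemma gY_tendsto {Ω : Type*} [MeasurableSpace Ω] (P : Measure Ω) (Y : Ω → ℝ)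
    (hY : Measurable Y) (hmom : ∫⁻ ω, ENNReal.ofReal |Y ω| ∂P < ∞) :
    Filter.Tendsto (fun j : ℕ => ∫⁻ ω, ENNReal.ofReal (max (|Y ω| - j) 0) ∂P)
      Filter.atTop (nhds 0) := by
  have h0 : (0 : ℝ≥0∞) = ∫⁻ ω, 0 ∂P := by simp
  rw [h0]
  apply tendsto_lintegral_of_dominated_convergence (fun ω => ENNReal.ofReal (|Y ω|))
  · intro j
    exact ENNReal.measurable_ofReal.comp ((hY.abs.sub measurable_const).max measurable_const)
  · intro j
    apply Filter.Eventually.of_forall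
    intro ω
    exact ENNReal.ofReal_le_ofReal (max_le (by linarith [Nat.cast_nonneg' (α := ℝ) j]) (abs_nonneg _))
  · exact hmom.ne
  · apply Filter.Eventually.of_forall
    intro ω
    apply Filter.Tendsto.congr' (f₁ := fun _ : ℕ => (0:ℝ≥0∞))
    · rw [Filter.EventuallyEq, Filter.eventually_atTop]
      refine ⟨⌈|Y ω|⌉₊, fun j hj => ?_⟩
      symm
      rw [ENNReal.ofReal_eq_zero]
      apply max_le _ le_rfl
      have h1 : |Y ω| ≤ (j : ℝ) := le_trans (Nat.le_ceil _) (by exact_mod_cast hj)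
      linarith
    · exact tendsto_const_nhds

/-- Discrete Fourier transform `S_n(t) = ∑_{k ⪯ n} e^{i k⋅t} X_k`. -/
noncomputable def dft {Ω : Type*} {d : ℕ} (X : (Fin d → ℕ+) → Ω → ℝ)
    (n : Fin d → ℕ+) (t : Fin d → ℝ) (ω : Ω) : ℂ :=
  ∑ k ∈ Finset.Icc 1 n,
    Complex.exp (Complex.I * ((∑ i, ((k i : ℕ) : ℝ) * t i : ℝ) : ℂ)) * (X k ω : ℂ)

lemma card_Icc_pnat {d : ℕ} (n : Fin d → ℕ+) : (Finset.Icc (1 : Fin d → ℕ+) n).card = pidx n := by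
  rw [Pi.card_Icc, pidx]
  congr 1
  ext i
  rw [PNat.card_Icc]
  rfl

lemma dft_meas {Ω : Type*} [MeasurableSpace Ω] {d : ℕ} (X : (Fin d → ℕ+) → Ω → ℝ)
    (hX : ∀ k, Measurable (X k)) (n : Fin d → ℕ+) :
    Measurable (fun q : Ω × (Fin d → ℝ) => dft X n q.2 q.1) := by
  unfold dft
  apply Finset.measurable_sum
  intro k _
  apply Measurable.mul
  · apply Complex.continuous_exp.measurable.comp
    apply Measurable.const_mul
    apply Complex.measurable_ofReal.comp
    apply Finset.measurable_sum
    intro i _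
    exact measurable_const.mul ((measurable_pi_apply i).comp measurable_snd)
  · exact Complex.measurable_ofReal.comp ((hX k).comp measurable_fst)

lemma dft_cont {Ω : Type*} {d : ℕ} (X : (Fin d → ℕ+) → Ω → ℝ) (n : Fin d → ℕ+) (ω : Ω) :
    Continuous (fun t : Fin d → ℝ => dft X n t ω) := by
  unfold dft
  apply continuous_finset_sum
  intro k _
  exact Continuous.mul (Complex.continuous_exp.comp (continuous_const.mul
    (Complex.continuous_ofReal.comp (continuous_finset_sum _
      (fun i _ => continuous_const.mul (continuous_apply i)))))) continuous_const

lemma dft_split {Ω : Type*} {d : ℕ} (X Z W : (Fin d → ℕ+) → Ω → ℝ)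
    (h : ∀ k ω, X k ω = Z k ω + W k ω) (n : Fin d → ℕ+) (t : Fin d → ℝ) (ω : Ω) :
    dft X n t ω = dft Z n t ω + dft W n t ω := by
  unfold dft
  rw [← Finset.sum_add_distrib]
  apply Finset.sum_congr rfl
  intro k _
  rw [h k ω]
  push_cast
  ring

lemma dft_abs_le {Ω : Type*} {d : ℕ} (X : (Fin d → ℕ+) → Ω → ℝ) (n : Fin d → ℕ+)
    (t : Fin d → ℝ) (ω : Ω) :
    ‖dft X n t ω‖ ≤ ∑ k ∈ Finset.Icc 1 n, |X k ω| := by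
  unfold dft
  refine le_trans (norm_sum_le _ _) ?_
  apply Finset.sum_le_sum
  intro k _
  rw [norm_mul, norm_exp_I_real, one_mul, Complex.norm_real, Real.norm_eq_abs]

theorem stmt15 {Ω : Type*} [MeasurableSpace Ω] (P : Measure Ω) [IsProbabilityMeasure P]
    {d : ℕ} (hd : 1 ≤ d)
    (X : (Fin d → ℕ+) → Ω → ℝ) (Y : Ω → ℝ)
    (hX : ∀ k, Measurable (X k)) (hY : Measurable Y)
    (M : ℝ) (hM : 0 ≤ M)
    (hMD : ∀ x : ℝ, 0 ≤ x → ∀ n : Fin d → ℕ+,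
      ∑ k ∈ Finset.Icc 1 n, P {ω : Ω | x < |X k ω|}
        ≤ (pidx n : ℝ≥0∞) * ENNReal.ofReal M * P {ω : Ω | x < |Y ω|})
    (hmom : ∫⁻ ω, ENNReal.ofReal |Y ω| ∂P < ∞) :
    ∀ ε : ℝ, 0 < ε → ∃ m : ℕ, ∀ n : Fin d → ℕ+, (∃ i, m ≤ (n i : ℕ)) →
      ∫⁻ q : Ω × (Fin d → ℝ),
          ENNReal.ofReal (‖dft X n q.2 q.1‖ / (pidx n : ℝ))
        ∂(P.prod (Measure.pi fun _ : Fin d =>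
            (volume : Measure ℝ).restrict (Set.Ico (-Real.pi) Real.pi)))
      < ENNReal.ofReal ε := by
  intro ε hε
  have hνeq : (Measure.pi fun _ : Fin d =>
      (volume : Measure ℝ).restrict (Set.Ico (-Real.pi) Real.pi)) = nud d := rfl
  have h2pi : (0:ℝ) < (2*Real.pi)^d := by positivity
  have hhalf : (0:ℝ) < ε/2 := by linarith
  set K := ENNReal.ofReal ((2*Real.pi)^d) with hK
  set C := K * ENNReal.ofReal M with hC
  have hCne : C ≠ ∞ := by
    rw [hC]; exact ENNReal.mul_ne_top ENNReal.ofReal_ne_top ENNReal.ofReal_ne_top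
  have hδpos : 0 < ENNReal.ofReal (ε/2) / (C+1) :=
    ENNReal.div_pos (by simp [ENNReal.ofReal_eq_zero]; linarith)
      (by simp [ENNReal.add_ne_top, hCne])
  -- choose truncation level j
  obtain ⟨j, hj⟩ : ∃ j : ℕ, ∫⁻ ω, ENNReal.ofReal (max (|Y ω| - j) 0) ∂P
      < ENNReal.ofReal (ε/2) / (C+1) :=
    ((gY_tendsto P Y hY hmom).eventually (gt_mem_nhds hδpos)).exists
  set gY := ∫⁻ ω, ENNReal.ofReal (max (|Y ω| - j) 0) ∂P with hgY
  have hjC : C * gY ≤ ENNReal.ofReal (ε/2) := by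
    calc C * gY ≤ (C+1) * (ENNReal.ofReal (ε/2) / (C+1)) :=
          mul_le_mul' le_self_add hj.le
    _ = ENNReal.ofReal (ε/2) := ENNReal.mul_div_cancel'
          (by simp) (by simp [ENNReal.add_ne_top, hCne])
  -- choose m
  set c0 := (2*Real.pi)^d * j with hc0
  have hc0nn : 0 ≤ c0 := by positivity
  set m := ⌈(c0/(ε/2))^2⌉₊ + 1 with hm
  refine ⟨m, fun n hn => ?_⟩
  obtain ⟨i0, hi0⟩ := hn
  -- basic numeric facts about n
  have hNge : (m : ℝ) ≤ (pidx n : ℝ) := by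
    have h1 : (n i0 : ℕ) ≤ pidx n := by
      rw [pidx]
      exact Finset.single_le_prod' (f := fun i => ((n i : ℕ))) (fun i _ => (n i).pos)
        (Finset.mem_univ i0)
    exact_mod_cast le_trans hi0 h1
  have hm1 : (1:ℝ) ≤ (m:ℝ) := by
    have : 1 ≤ m := Nat.le_add_left 1 _
    exact_mod_cast this
  set N := ((pidx n : ℕ) : ℝ) with hNdef
  have hNpos : (0:ℝ) < N := lt_of_lt_of_le (by linarith) hNge
  have hN1 : (1:ℝ) ≤ N := le_trans hm1 hNge
  have hsqrtN : c0 / (ε/2) < Real.sqrt N := by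
    apply Real.lt_sqrt_of_sq_lt
    calc (c0/(ε/2))^2 ≤ (⌈(c0/(ε/2))^2⌉₊ : ℝ) := Nat.le_ceil _
    _ < (m : ℝ) := by rw [hm]; push_cast; linarith
    _ ≤ N := hNge
  have hsqrtNpos : 0 < Real.sqrt N := Real.sqrt_pos.mpr hNpos
  have hmain : c0 / Real.sqrt N < ε/2 := by
    rw [div_lt_iff₀ hsqrtNpos]
    rw [div_lt_iff₀ hhalf] at hsqrtN
    linarith
  -- truncation
  set Z : (Fin d → ℕ+) → Ω → ℝ := fun k ω => max (min (X k ω) j) (-(j:ℝ)) with hZ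
  set W : (Fin d → ℕ+) → Ω → ℝ := fun k ω => X k ω - Z k ω with hW
  have hZmeas : ∀ k, Measurable (Z k) := fun k =>
    ((hX k).min measurable_const).max measurable_const
  have hWmeas : ∀ k, Measurable (W k) := fun k => (hX k).sub (hZmeas k)
  have hXZW : ∀ k ω, X k ω = Z k ω + W k ω := fun k ω => by rw [hW]; ring
  have hjnn : (0:ℝ) ≤ (j:ℝ) := Nat.cast_nonneg j
  have hWabs : ∀ k ω, |W k ω| = max (|X k ω| - j) 0 := fun k ω => clamp_abs _ _ hjnn
  have hZabs : ∀ k ω, |Z k ω| ≤ (j:ℝ) := fun k ω => clamp_abs_le _ _ hjnn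
  set A := Finset.Icc (1 : Fin d → ℕ+) n with hAdef
  set ρ := P.prod (nud d) with hρ
  rw [hνeq]
  -- measurability of the three dfts
  have hFXm : Measurable (fun q : Ω × (Fin d → ℝ) => ENNReal.ofReal (‖dft X n q.2 q.1‖)) :=
    ENNReal.measurable_ofReal.comp (continuous_norm.measurable.comp (dft_meas X hX n))
  have hFZm : Measurable (fun q : Ω × (Fin d → ℝ) => ENNReal.ofReal (‖dft Z n q.2 q.1‖)) :=
    ENNReal.measurable_ofReal.comp (continuous_norm.measurable.comp (dft_meas Z hZmeas n))
  have hFWm : Measurable (fun q : Ω × (Fin d → ℝ) => ENNReal.ofReal (‖dft W n q.2 q.1‖)) :=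
    ENNReal.measurable_ofReal.comp (continuous_norm.measurable.comp (dft_meas W hWmeas n))
  -- step 1: pull out the constant
  have hsplit0 : ∫⁻ q : Ω × (Fin d → ℝ),
      ENNReal.ofReal (‖dft X n q.2 q.1‖ / (pidx n : ℝ)) ∂ρ
      = (∫⁻ q : Ω × (Fin d → ℝ), ENNReal.ofReal (‖dft X n q.2 q.1‖) ∂ρ)
        / ENNReal.ofReal N := by
    rw [← hNdef]
    simp_rw [ENNReal.ofReal_div_of_pos hNpos, div_eq_mul_inv]
    rw [lintegral_mul_const' _ _ (by simp [ENNReal.ofReal_eq_zero]; linarith)]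
  -- triangle inequality
  have htri : ∫⁻ q : Ω × (Fin d → ℝ), ENNReal.ofReal (‖dft X n q.2 q.1‖) ∂ρ
      ≤ (∫⁻ q : Ω × (Fin d → ℝ), ENNReal.ofReal (‖dft Z n q.2 q.1‖) ∂ρ)
        + (∫⁻ q : Ω × (Fin d → ℝ), ENNReal.ofReal (‖dft W n q.2 q.1‖) ∂ρ) := by
    rw [← lintegral_add_left hFZm]
    refine lintegral_mono fun q => ?_
    dsimp only
    rw [← ENNReal.ofReal_add (norm_nonneg _) (norm_nonneg _)]
    apply ENNReal.ofReal_le_ofReal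
    rw [dft_split X Z W hXZW n q.2 q.1]
    exact norm_add_le _ _
  -- tail (W) part
  have hmeasW1 : ∀ k, Measurable fun x : ℝ => P {ω | (j:ℝ) + x < |X k ω|} := by
    intro k
    apply Antitone.measurable
    intro x y hxy
    apply measure_mono
    intro ω hω
    simp only [Set.mem_setOf_eq] at hω ⊢
    linarith
  have hmeasY1 : Measurable fun x : ℝ => P {ω | (j:ℝ) + x < |Y ω|} := by
    apply Antitone.measurable
    intro x y hxy
    apply measure_mono
    intro ω hω
    simp only [Set.mem_setOf_eq] at hω ⊢
    linarith
  have hWsum : ∑ k ∈ A, ∫⁻ ω, ENNReal.ofReal (|W k ω|) ∂P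
      ≤ (pidx n : ℝ≥0∞) * ENNReal.ofReal M * gY := by
    have h1 : ∀ k ∈ A, ∫⁻ ω, ENNReal.ofReal (|W k ω|) ∂P
        = ∫⁻ x in Set.Ioi (0:ℝ), P {ω | (j:ℝ) + x < |X k ω|} := by
      intro k _
      have he : (fun ω => ENNReal.ofReal (|W k ω|))
          = fun ω => ENNReal.ofReal (max (|X k ω| - j) 0) := by
        funext ω; rw [hWabs]
      rw [he, tail_eq P (X k) (hX k) j hjnn]
    rw [Finset.sum_congr rfl h1, ← lintegral_finset_sum _ (fun k _ => hmeasW1 k)]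
    calc ∫⁻ x in Set.Ioi (0:ℝ), ∑ k ∈ A, P {ω | (j:ℝ) + x < |X k ω|}
        ≤ ∫⁻ x in Set.Ioi (0:ℝ), (pidx n : ℝ≥0∞) * ENNReal.ofReal M * P {ω | (j:ℝ) + x < |Y ω|} := by
          apply setLIntegral_mono (hmeasY1.const_mul _)
          intro x hx
          exact hMD ((j:ℝ) + x) (by have := Set.mem_Ioi.mp hx; linarith) n
      _ = (pidx n : ℝ≥0∞) * ENNReal.ofReal M * ∫⁻ x in Set.Ioi (0:ℝ), P {ω | (j:ℝ) + x < |Y ω|} :=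
          lintegral_const_mul' _ _ (ENNReal.mul_ne_top (ENNReal.natCast_ne_top _) ENNReal.ofReal_ne_top)
      _ = (pidx n : ℝ≥0∞) * ENNReal.ofReal M * gY := by rw [hgY, tail_eq P Y hY j hjnn]
  have hWmeas1 : Measurable fun ω => ∑ k ∈ A, ENNReal.ofReal (|W k ω|) :=
    Finset.measurable_sum _ (fun k _ => (hWmeas k).abs.ennreal_ofReal)
  have hWprod : ∫⁻ q : Ω × (Fin d → ℝ), ENNReal.ofReal (‖dft W n q.2 q.1‖) ∂ρ
      ≤ (pidx n : ℝ≥0∞) * (C * gY) := by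
    have hb : ∫⁻ q : Ω × (Fin d → ℝ), ENNReal.ofReal (‖dft W n q.2 q.1‖) ∂ρ
        ≤ ∫⁻ q : Ω × (Fin d → ℝ), (∑ k ∈ A, ENNReal.ofReal (|W k q.1|)) * 1 ∂ρ := by
      refine lintegral_mono fun q => ?_
      dsimp only
      rw [mul_one]
      refine le_trans (ENNReal.ofReal_le_ofReal (dft_abs_le W n q.2 q.1)) ?_
      rw [ENNReal.ofReal_sum_of_nonneg (fun k _ => abs_nonneg _)]
    have hc : ∫⁻ q : Ω × (Fin d → ℝ), (∑ k ∈ A, ENNReal.ofReal (|W k q.1|)) * 1 ∂ρ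
        = (∑ k ∈ A, ∫⁻ ω, ENNReal.ofReal (|W k ω|) ∂P) * K := by
      rw [hρ, lintegral_prod_mul hWmeas1.aemeasurable aemeasurable_const, lintegral_one, nud_univ,
        lintegral_finset_sum _ (fun k _ => (hWmeas k).abs.ennreal_ofReal)]
    calc ∫⁻ q : Ω × (Fin d → ℝ), ENNReal.ofReal (‖dft W n q.2 q.1‖) ∂ρ
        ≤ (∑ k ∈ A, ∫⁻ ω, ENNReal.ofReal (|W k ω|) ∂P) * K := le_trans hb hc.le
      _ ≤ ((pidx n : ℝ≥0∞) * ENNReal.ofReal M * gY) * K := mul_le_mul' hWsum le_rfl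
      _ = (pidx n : ℝ≥0∞) * (C * gY) := by rw [hC, hK]; ring
  -- truncated (Z) part
  have hintZ : ∀ ω, Integrable (fun t => Complex.normSq (dft Z n t ω)) (nud d) := by
    intro ω
    apply Integrable.mono' (integrable_const (((pidx n : ℝ) * j)^2))
      (((Complex.continuous_normSq.comp (dft_cont Z n ω)).aestronglyMeasurable :
        AEStronglyMeasurable (fun t => Complex.normSq (dft Z n t ω)) (nud d)))
    apply Filter.Eventually.of_forall
    intro t
    show ‖Complex.normSq (dft Z n t ω)‖ ≤ ((pidx n : ℝ) * j)^2
    rw [Real.norm_eq_abs, abs_of_nonneg (Complex.normSq_nonneg _), ← Complex.sq_norm]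
    apply pow_le_pow_left₀ (norm_nonneg _)
    calc ‖dft Z n t ω‖ ≤ ∑ k ∈ Finset.Icc 1 n, |Z k ω| := dft_abs_le Z n t ω
      _ ≤ ∑ k ∈ Finset.Icc 1 n, (j:ℝ) := Finset.sum_le_sum (fun k _ => hZabs k ω)
      _ = (pidx n : ℝ) * j := by
          rw [Finset.sum_const, ← hAdef, card_Icc_pnat, nsmul_eq_mul]
  have hZsum : ∀ ω, ∑ k ∈ A, Complex.normSq ((Z k ω : ℝ) : ℂ) ≤ N * (j:ℝ)^2 := by
    intro ω
    calc ∑ k ∈ A, Complex.normSq ((Z k ω : ℝ) : ℂ) ≤ ∑ k ∈ A, (j:ℝ)^2 := by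
          apply Finset.sum_le_sum
          intro k _
          rw [Complex.normSq_ofReal, ← abs_mul_abs_self, sq]
          exact mul_le_mul (hZabs k ω) (hZabs k ω) (abs_nonneg _) hjnn
      _ = N * (j:ℝ)^2 := by rw [Finset.sum_const, hAdef, card_Icc_pnat, nsmul_eq_mul, hNdef]
  have horthω : ∀ ω, ∫⁻ t, ENNReal.ofReal (Complex.normSq (dft Z n t ω)) ∂(nud d)
      = ENNReal.ofReal ((2*Real.pi)^d * ∑ k ∈ A, Complex.normSq ((Z k ω : ℝ) : ℂ)) := by
    intro ω
    rw [← ofReal_integral_eq_lintegral_ofReal (hintZ ω)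
      (Filter.Eventually.of_forall fun t => Complex.normSq_nonneg _)]
    congr 1
    exact orth n (fun k => ((Z k ω : ℝ) : ℂ))
  have hmeasZ2 : Measurable fun q : Ω × (Fin d → ℝ) =>
      ENNReal.ofReal (Complex.normSq (dft Z n q.2 q.1)) :=
    ENNReal.measurable_ofReal.comp (Complex.continuous_normSq.measurable.comp (dft_meas Z hZmeas n))
  have hZ2 : ∫⁻ q : Ω × (Fin d → ℝ),
      (ENNReal.ofReal (‖dft Z n q.2 q.1‖))^(2:ℝ) ∂ρ
      ≤ ENNReal.ofReal ((2*Real.pi)^d * (N * (j:ℝ)^2)) := by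
    have he : ∀ q : Ω × (Fin d → ℝ), (ENNReal.ofReal (‖dft Z n q.2 q.1‖))^(2:ℝ)
        = ENNReal.ofReal (Complex.normSq (dft Z n q.2 q.1)) := by
      intro q
      rw [ENNReal.rpow_two, ← ENNReal.ofReal_pow (norm_nonneg _), Complex.sq_norm]
    simp_rw [he]
    rw [hρ, lintegral_prod _ hmeasZ2.aemeasurable]
    calc ∫⁻ ω, ∫⁻ t, ENNReal.ofReal (Complex.normSq (dft Z n t ω)) ∂(nud d) ∂P
        = ∫⁻ ω, ENNReal.ofReal ((2*Real.pi)^d * ∑ k ∈ A, Complex.normSq ((Z k ω : ℝ) : ℂ)) ∂P :=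
          lintegral_congr (fun ω => horthω ω)
      _ ≤ ∫⁻ _, ENNReal.ofReal ((2*Real.pi)^d * (N * (j:ℝ)^2)) ∂P := by
          apply lintegral_mono
          intro ω
          exact ENNReal.ofReal_le_ofReal (mul_le_mul_of_nonneg_left (hZsum ω) h2pi.le)
      _ = ENNReal.ofReal ((2*Real.pi)^d * (N * (j:ℝ)^2)) := by
          rw [lintegral_const, measure_univ, mul_one]
  have hsqrteq : Real.sqrt ((2*Real.pi)^d * (N * (j:ℝ)^2)) * Real.sqrt ((2*Real.pi)^d)
      = c0 * Real.sqrt N := by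
    rw [Real.sqrt_mul h2pi.le, Real.sqrt_mul hNpos.le, Real.sqrt_sq hjnn, hc0]
    have h := Real.mul_self_sqrt h2pi.le
    linear_combination (Real.sqrt N * (j:ℝ)) * h
  have hCS : ∫⁻ q : Ω × (Fin d → ℝ), ENNReal.ofReal (‖dft Z n q.2 q.1‖) ∂ρ
      ≤ ENNReal.ofReal (c0 * Real.sqrt N) := by
    have h22 : Real.HolderConjugate 2 2 := Real.HolderConjugate.two_two
    have hcs := ENNReal.lintegral_mul_le_Lp_mul_Lq ρ h22 hFZm.aemeasurable
      (aemeasurable_const (b := (1:ℝ≥0∞)))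
    simp only [Pi.mul_apply, Pi.one_apply, mul_one, ENNReal.one_rpow, lintegral_one] at hcs
    have hρuniv : ρ Set.univ = K := by
      rw [hρ, ← Set.univ_prod_univ, Measure.prod_prod, measure_univ, one_mul, nud_univ]
    rw [hρuniv] at hcs
    refine le_trans hcs ?_
    calc (∫⁻ q : Ω × (Fin d → ℝ), (ENNReal.ofReal (‖dft Z n q.2 q.1‖))^(2:ℝ) ∂ρ)
          ^ (1/(2:ℝ)) * K ^ (1/(2:ℝ))
        ≤ (ENNReal.ofReal ((2*Real.pi)^d * (N * (j:ℝ)^2))) ^ (1/(2:ℝ)) * K ^ (1/(2:ℝ)) :=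
          mul_le_mul' (ENNReal.rpow_le_rpow hZ2 (by norm_num)) le_rfl
      _ = ENNReal.ofReal (c0 * Real.sqrt N) := by
          rw [hK, ENNReal.ofReal_rpow_of_nonneg (by positivity) (by norm_num),
            ENNReal.ofReal_rpow_of_nonneg h2pi.le (by norm_num),
            ← ENNReal.ofReal_mul (by positivity), ← Real.sqrt_eq_rpow, ← Real.sqrt_eq_rpow,
            hsqrteq]
  -- combine
  rw [hsplit0]
  have hZpart : (∫⁻ q : Ω × (Fin d → ℝ), ENNReal.ofReal (‖dft Z n q.2 q.1‖) ∂ρ)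
      / ENNReal.ofReal N < ENNReal.ofReal (ε/2) := by
    have h1 : (∫⁻ q : Ω × (Fin d → ℝ), ENNReal.ofReal (‖dft Z n q.2 q.1‖) ∂ρ)
        / ENNReal.ofReal N ≤ ENNReal.ofReal (c0 * Real.sqrt N) / ENNReal.ofReal N :=
      ENNReal.div_le_div_right hCS _
    have h2 : ENNReal.ofReal (c0 * Real.sqrt N) / ENNReal.ofReal N
        = ENNReal.ofReal (c0 / Real.sqrt N) := by
      rw [← ENNReal.ofReal_div_of_pos hNpos]
      congr 1
      rw [div_eq_div_iff hNpos.ne' hsqrtNpos.ne', mul_assoc, Real.mul_self_sqrt hNpos.le]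
    refine lt_of_le_of_lt (le_trans h1 h2.le) ?_
    exact (ENNReal.ofReal_lt_ofReal_iff hhalf).mpr hmain
  have hWpart : (∫⁻ q : Ω × (Fin d → ℝ), ENNReal.ofReal (‖dft W n q.2 q.1‖) ∂ρ)
      / ENNReal.ofReal N ≤ ENNReal.ofReal (ε/2) := by
    refine le_trans (ENNReal.div_le_of_le_mul ?_) hjC
    rw [hNdef, ENNReal.ofReal_natCast]
    rw [mul_comm] at hWprod
    exact hWprod
  calc (∫⁻ q : Ω × (Fin d → ℝ), ENNReal.ofReal (‖dft X n q.2 q.1‖) ∂ρ)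
        / ENNReal.ofReal N
      ≤ ((∫⁻ q : Ω × (Fin d → ℝ), ENNReal.ofReal (‖dft Z n q.2 q.1‖) ∂ρ)
        + (∫⁻ q : Ω × (Fin d → ℝ), ENNReal.ofReal (‖dft W n q.2 q.1‖) ∂ρ))
        / ENNReal.ofReal N := ENNReal.div_le_div_right htri _
    _ = (∫⁻ q : Ω × (Fin d → ℝ), ENNReal.ofReal (‖dft Z n q.2 q.1‖) ∂ρ)
        / ENNReal.ofReal N
        + (∫⁻ q : Ω × (Fin d → ℝ), ENNReal.ofReal (‖dft W n q.2 q.1‖) ∂ρ)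
        / ENNReal.ofReal N := ENNReal.add_div
    _ < ENNReal.ofReal (ε/2) + ENNReal.ofReal (ε/2) :=
        ENNReal.add_lt_add_of_lt_of_le (ne_top_of_le_ne_top ENNReal.ofReal_ne_top hWpart)
          hZpart hWpart
    _ = ENNReal.ofReal ε := by
        rw [← ENNReal.ofReal_add hhalf.le hhalf.le]
        norm_num
end
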